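/- arXiv:2010.13363 — 8 statements merged into one kernel-verified Lean document; each statement's English description precedes it below -/
import Mathlib

section
/- For any N, d_x ∈ ℕ with N, d_x ≥ 1 and any set X ⊂ ℝ^{d_x} with |X| = N, there exists a unit vector u ∈ ℝ^{d_x} (‖u‖₂ = 1) such that for all x, x′ ∈ X: (1/N²)·√(8/(π d_x))·‖x − x′‖₂ ≤ |uᵀ(x − x′)| ≤ ‖x − x′‖₂. -/
open Real Filter

noncomputable section

/-- A sigmoidal activation function. -/
def Sigmoidal (σ : ℝ → ℝ) : Prop :=
  (∃ a b : ℝ, Tendsto σ atBot (nhds a) ∧ Tendsto σ atTop (nhds b) ∧ a ≠ b) ∧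
  (∃ z : ℝ, ContDiffAt ℝ 1 σ z ∧ deriv σ z ≠ 0)

/-- `f` is an affine map between finite-dimensional coordinate spaces. -/
def IsAffineVecMap {m n : ℕ} (t : (Fin m → ℝ) → (Fin n → ℝ)) : Prop :=
  ∃ (W : Matrix (Fin n) (Fin m) ℝ) (b : Fin n → ℝ), ∀ x, t x = W.mulVec x + b

/-- A `σ` network with hidden layer widths `ws`. -/
def IsNet (σ : ℝ → ℝ) : (din : ℕ) → (ws : List ℕ) → (dout : ℕ) →
    ((Fin din → ℝ) → (Fin dout → ℝ)) → Prop
  | _, [], _, f => IsAffineVecMap f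
  | din, d :: ds, dout, f =>
      ∃ (t : (Fin din → ℝ) → (Fin d → ℝ)) (g : (Fin d → ℝ) → (Fin dout → ℝ)),
        IsAffineVecMap t ∧ IsNet σ d ds dout g ∧ ∀ x, f x = g (fun i => σ (t x i))

/-- The binary threshold (step) function. -/
def stepFun (x : ℝ) : ℝ := if 0 ≤ x then 1 else 0

/-- A `Step`+`Id` network: each hidden neuron applies either `Step` or `Id`. -/
def IsStepIdNet : (din : ℕ) → (ws : List ℕ) → (dout : ℕ) →
    ((Fin din → ℝ) → (Fin dout → ℝ)) → Prop
  | _, [], _, f => IsAffineVecMap f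
  | din, d :: ds, dout, f =>
      ∃ (t : (Fin din → ℝ) → (Fin d → ℝ)) (φ : Fin d → Bool)
        (g : (Fin d → ℝ) → (Fin dout → ℝ)),
        IsAffineVecMap t ∧ IsStepIdNet d ds dout g ∧
        ∀ x, f x = g (fun i => if φ i then stepFun (t x i) else t x i)

/-- Number of parameters `Σ_ℓ d_{ℓ+1}(d_ℓ + 1)`. -/
def paramCount : (din : ℕ) → (ws : List ℕ) → (dout : ℕ) → ℕ
  | din, [], dout => dout * (din + 1)
  | din, d :: ds, dout => d * (din + 1) + paramCount d ds dout

/-- Euclidean norm on `Fin d → ℝ`. -/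
def eNorm {d : ℕ} (x : Fin d → ℝ) : ℝ := Real.sqrt (∑ i, (x i) ^ 2)

/-- Euclidean inner product. -/
def eDot {d : ℕ} (u v : Fin d → ℝ) : ℝ := ∑ i, u i * v i

/-- A finite set is `Δ`-separated: the largest pairwise distance is less than
`Δ` times the smallest pairwise distance. -/
def Separated (Δ : ℝ) {d : ℕ} (X : Finset (Fin d → ℝ)) : Prop :=
  ∀ x ∈ X, ∀ x' ∈ X, ∀ z ∈ X, ∀ z' ∈ X, x ≠ x' → z ≠ z' →
    eNorm (x - x') < Δ * eNorm (z - z')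

/-!
Pick `g` in the unit ball of `ℝ^(n+1)`. For a nonzero difference `v = x - y`, the `g` with
`0 ≤ ⟪v, g⟫ ≤ ε‖v‖` form a half-slab of width `ε`, which meets the ball in volume at most
`ε V_n`, where `V_k` is the volume of the unit ball of `ℝ^k`. Since `v` and `-v` both occur among
the at most `N²` differences, a `g` outside all these half-slabs satisfies
`|⟪g, x - y⟫| > ε‖x - y‖` for every pair, and so does `u = g / ‖g‖` because `‖g‖ ≤ 1`.
With `ε = √(8 / (π (n+1))) / N²` the excluded volume is at most `√(8 / (π (n+1))) V_n`, which is
less than `V_(n+1)` by the log-convexity bound `Γ(x + 1/2) ≤ √x Γ(x)`.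
-/

open MeasureTheory Metric Set WithLp

open scoped RealInnerProductSpace

theorem Real.Gamma_add_half_le_sqrt_mul_Gamma {x : ℝ} (hx : 0 < x) :
    Gamma (x + 1 / 2) ≤ √x * Gamma x := by
  have h := Gamma_mul_add_mul_le_rpow_Gamma_mul_rpow_Gamma hx (by linarith : 0 < x + 1)
    (by norm_num : (0 : ℝ) < 1 / 2) (by norm_num : (0 : ℝ) < 1 / 2) (by norm_num)
  rwa [show 1 / 2 * x + 1 / 2 * (x + 1) = x + 1 / 2 by ring, Gamma_add_one hx.ne',
    ← mul_rpow (Gamma_pos_of_pos hx).le (by positivity), ← sqrt_eq_rpow,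
    show Gamma x * (x * Gamma x) = x * Gamma x ^ 2 by ring, sqrt_mul hx.le,
    sqrt_sq (Gamma_pos_of_pos hx).le] at h

namespace EuclideanSpace

theorem volume_closedBall_zero_one (k : ℕ) :
    volume (closedBall (0 : EuclideanSpace ℝ (Fin k)) 1) =
      ENNReal.ofReal (√π ^ k / Gamma (k / 2 + 1)) := by
  rcases k.eq_zero_or_pos with rfl | hk
  · simp [volume_euclideanSpace_eq_dirac, measurableSet_closedBall]
  · have : Nonempty (Fin k) := Fin.pos_iff_nonempty.mp hk
    simpa using volume_closedBall (Fin k) 0 1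

theorem ofReal_sqrt_mul_volume_closedBall_lt_succ (n : ℕ) :
    ENNReal.ofReal √(8 / (π * (n + 1 : ℕ))) *
        volume (closedBall (0 : EuclideanSpace ℝ (Fin n)) 1) <
      volume (closedBall (0 : EuclideanSpace ℝ (Fin (n + 1))) 1) := by
  rw [volume_closedBall_zero_one, volume_closedBall_zero_one,
    ← ENNReal.ofReal_mul (sqrt_nonneg _), ENNReal.ofReal_lt_ofReal_iff (by positivity)]
  have hGamma : Gamma ((n + 1 : ℕ) / 2 + 1) ≤ √(n / 2 + 1) * Gamma (n / 2 + 1) := by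
    convert Gamma_add_half_le_sqrt_mul_Gamma (x := n / 2 + 1) (by positivity) using 2
    push_cast; ring
  have hc : √(8 / (π * (n + 1 : ℕ))) * √(n / 2 + 1) < √π := by
    rw [← sqrt_mul (by positivity), sqrt_lt_sqrt_iff (by positivity), div_mul_eq_mul_div,
      div_lt_iff₀ (by positivity)]
    push_cast
    nlinarith [pi_gt_three, mul_self_lt_mul_self (by norm_num) pi_gt_three]
  calc √(8 / (π * (n + 1 : ℕ))) * (√π ^ n / Gamma (n / 2 + 1))
      = √(8 / (π * (n + 1 : ℕ))) * √(n / 2 + 1) * √π ^ n /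
          (√(n / 2 + 1) * Gamma (n / 2 + 1)) := by
        field_simp
    _ < √π * √π ^ n / (√(n / 2 + 1) * Gamma (n / 2 + 1)) := by gcongr
    _ ≤ √π ^ (n + 1) / Gamma ((n + 1 : ℕ) / 2 + 1) := by
        rw [pow_succ']
        gcongr

theorem volume_apply_zero_mem_Icc_inter_closedBall_le (n : ℕ) (a b : ℝ) :
    volume ({y : EuclideanSpace ℝ (Fin (n + 1)) | y 0 ∈ Icc a b} ∩ closedBall 0 1) ≤
      ENNReal.ofReal (b - a) * volume (closedBall (0 : EuclideanSpace ℝ (Fin n)) 1) := by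
  let split : EuclideanSpace ℝ (Fin (n + 1)) → ℝ × EuclideanSpace ℝ (Fin n) :=
    Prod.map id (toLp 2) ∘ MeasurableEquiv.piFinSuccAbove (fun _ => ℝ) 0 ∘ ofLp
  have hsplit : MeasurePreserving split volume (volume.prod volume) :=
    ((MeasurePreserving.id volume).prod (PiLp.volume_preserving_toLp (Fin n))).comp
      ((volume_preserving_piFinSuccAbove (fun _ => ℝ) 0).comp (PiLp.volume_preserving_ofLp _))
  have hsub : {y : EuclideanSpace ℝ (Fin (n + 1)) | y 0 ∈ Icc a b} ∩ closedBall 0 1 ⊆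
      split ⁻¹' (Icc a b ×ˢ closedBall 0 1) := by
    rintro y ⟨hy0, hy⟩
    refine ⟨hy0, ?_⟩
    simp only [mem_closedBall_zero_iff, norm_eq] at hy ⊢
    refine le_trans (sqrt_le_sqrt ?_) hy
    simpa [split, Fin.tail, Fin.sum_univ_succ (n := n)] using sq_nonneg (y 0)
  calc _ ≤ volume (split ⁻¹' (Icc a b ×ˢ closedBall 0 1)) := measure_mono hsub
    _ = volume (Icc a b) * volume (closedBall (0 : EuclideanSpace ℝ (Fin n)) 1) := by
      rw [hsplit.measure_preimage
        (measurableSet_Icc.prod measurableSet_closedBall).nullMeasurableSet, Measure.prod_prod]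
    _ = _ := by rw [Real.volume_Icc]

theorem volume_inner_mem_Icc_inter_closedBall_le {n : ℕ} {w : EuclideanSpace ℝ (Fin (n + 1))}
    (hw : ‖w‖ = 1) (a b : ℝ) :
    volume ({g | ⟪w, g⟫ ∈ Icc a b} ∩ closedBall 0 1) ≤
      ENNReal.ofReal (b - a) * volume (closedBall (0 : EuclideanSpace ℝ (Fin n)) 1) := by
  let e₀ : EuclideanSpace ℝ (Fin (n + 1)) := single 0 1
  let R := Submodule.reflection (ℝ ∙ (w - e₀))ᗮ
  have hRw : R w = e₀ := Submodule.reflection_sub (by simp [e₀, hw])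
  have hpre : {g | ⟪w, g⟫ ∈ Icc a b} ∩ closedBall 0 1 =
      R ⁻¹' ({y | y 0 ∈ Icc a b} ∩ closedBall 0 1) := by
    ext g
    simp [← R.inner_map_map w g, hRw, e₀, inner_single_left]
  have hmeas : MeasurableSet
      ({y : EuclideanSpace ℝ (Fin (n + 1)) | y 0 ∈ Icc a b} ∩ closedBall 0 1) :=
    (measurableSet_Icc.preimage (by fun_prop)).inter measurableSet_closedBall
  rw [hpre, R.measurePreserving.measure_preimage hmeas.nullMeasurableSet]
  exact volume_apply_zero_mem_Icc_inter_closedBall_le n a b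

theorem exists_norm_eq_one_forall_lt_inner {n : ℕ}
    (V : Finset (EuclideanSpace ℝ (Fin (n + 1)))) (hV : 0 ∉ V) {ε : ℝ}
    (hvol : V.card * ENNReal.ofReal ε * volume (closedBall (0 : EuclideanSpace ℝ (Fin n)) 1) <
      volume (closedBall (0 : EuclideanSpace ℝ (Fin (n + 1))) 1)) :
    ∃ u : EuclideanSpace ℝ (Fin (n + 1)), ‖u‖ = 1 ∧
      ∀ v ∈ V, 0 ≤ ⟪u, v⟫ → ε * ‖v‖ < ⟪u, v⟫ := by
  let slab (v : EuclideanSpace ℝ (Fin (n + 1))) :=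
    {g | ⟪v, g⟫ ∈ Icc 0 (ε * ‖v‖)} ∩ closedBall 0 1
  have hslab : ∀ v ∈ V, volume (slab v) ≤
      ENNReal.ofReal ε * volume (closedBall (0 : EuclideanSpace ℝ (Fin n)) 1) := by
    intro v hv
    have hv0 : v ≠ 0 := ne_of_mem_of_not_mem hv hV
    have hv : 0 < ‖v‖ := norm_pos_iff.mpr hv0
    calc volume (slab v)
        ≤ volume ({g | ⟪‖v‖⁻¹ • v, g⟫ ∈ Icc 0 ε} ∩ closedBall 0 1) := by
          refine measure_mono (inter_subset_inter_left _ fun g hg => ?_)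
          simp only [mem_ofPred_eq, mem_Icc, real_inner_smul_left] at hg ⊢
          constructor
          · exact mul_nonneg (inv_nonneg.mpr hv.le) hg.1
          · rw [inv_mul_le_iff₀ hv, mul_comm]; exact hg.2
      _ ≤ _ := by
          simpa using volume_inner_mem_Icc_inter_closedBall_le
            (norm_smul_inv_norm (𝕜 := ℝ) hv0) 0 ε
  have hbad : volume (insert 0 (⋃ v ∈ V, slab v)) <
      volume (closedBall (0 : EuclideanSpace ℝ (Fin (n + 1))) 1) :=
    calc volume (insert 0 (⋃ v ∈ V, slab v))
        = volume (⋃ v ∈ V, slab v) := measure_congr (insert_ae_eq_self _ _)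
      _ ≤ ∑ v ∈ V, volume (slab v) := measure_biUnion_finset_le V _
      _ ≤ V.card • (ENNReal.ofReal ε * volume (closedBall (0 : EuclideanSpace ℝ (Fin n)) 1)) :=
          Finset.sum_le_card_nsmul V _ _ hslab
      _ < _ := by rwa [nsmul_eq_mul, ← mul_assoc]
  obtain ⟨g, hg, hgbad⟩ : (closedBall 0 1 \ insert 0 (⋃ v ∈ V, slab v)).Nonempty :=
    nonempty_of_measure_ne_zero <| ne_bot_of_gt <| (tsub_pos_of_lt hbad).trans_le le_measure_sdiff
  have hg0 : g ≠ 0 := fun h => hgbad (h ▸ mem_insert _ _)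
  have hgpos : 0 < ‖g‖ := norm_pos_iff.mpr hg0
  refine ⟨‖g‖⁻¹ • g, norm_smul_inv_norm (𝕜 := ℝ) hg0, fun v hv hu => ?_⟩
  rw [real_inner_smul_left] at hu ⊢
  have hgv : 0 ≤ ⟪g, v⟫ := (mul_nonneg_iff_of_pos_left (inv_pos.mpr hgpos)).mp hu
  have hgslab : ε * ‖v‖ < ⟪g, v⟫ := by
    by_contra! h
    refine hgbad (mem_insert_of_mem _ (mem_biUnion hv ⟨?_, hg⟩))
    rw [mem_ofPred_eq, real_inner_comm]
    exact ⟨hgv, h⟩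
  calc ε * ‖v‖ < ⟪g, v⟫ := hgslab
    _ ≤ ‖g‖⁻¹ * ⟪g, v⟫ :=
      le_mul_of_one_le_left hgv ((one_le_inv₀ hgpos).mpr (mem_closedBall_zero_iff.mp hg))

theorem exists_norm_eq_one_forall_le_abs_inner_sub {n : ℕ}
    (X : Finset (EuclideanSpace ℝ (Fin (n + 1)))) :
    ∃ u : EuclideanSpace ℝ (Fin (n + 1)), ‖u‖ = 1 ∧ ∀ x ∈ X, ∀ y ∈ X,
      1 / (X.card : ℝ) ^ 2 * √(8 / (π * (n + 1 : ℕ))) * ‖x - y‖ ≤ |⟪u, x - y⟫| := by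
  classical
  set c := √(8 / (π * (n + 1 : ℕ)))
  set ε := 1 / (X.card : ℝ) ^ 2 * c
  set V := X.offDiag.image fun p => p.1 - p.2
  have hmemV {x y} (hx : x ∈ X) (hy : y ∈ X) (hxy : x ≠ y) : x - y ∈ V :=
    Finset.mem_image.mpr ⟨(x, y), Finset.mem_offDiag.mpr ⟨hx, hy, hxy⟩, rfl⟩
  have hV : 0 ∉ V := by simp [V, sub_eq_zero]
  have hVX : V.card ≤ X.card ^ 2 := calc
    V.card ≤ X.offDiag.card := Finset.card_image_le
    _ ≤ X.card ^ 2 := by rw [Finset.offDiag_card, sq]; exact Nat.sub_le _ _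
  have hcard : (V.card : ℝ) * ε ≤ c :=
    calc (V.card : ℝ) * ε ≤ (X.card : ℝ) ^ 2 * (1 / (X.card : ℝ) ^ 2) * c := by
          rw [mul_assoc]; gcongr; exact_mod_cast hVX
      _ ≤ 1 * c := by gcongr; rw [mul_one_div]; exact div_self_le_one _
      _ = c := one_mul c
  obtain ⟨u, hu, huV⟩ := exists_norm_eq_one_forall_lt_inner V hV (ε := ε) <|
    calc (V.card : ENNReal) * ENNReal.ofReal ε *
          volume (closedBall (0 : EuclideanSpace ℝ (Fin n)) 1)
        = ENNReal.ofReal (V.card * ε) * volume (closedBall (0 : EuclideanSpace ℝ (Fin n)) 1) := by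
          rw [ENNReal.ofReal_mul (Nat.cast_nonneg _), ENNReal.ofReal_natCast]
      _ ≤ ENNReal.ofReal c * volume (closedBall (0 : EuclideanSpace ℝ (Fin n)) 1) := by
          gcongr
      _ < _ := ofReal_sqrt_mul_volume_closedBall_lt_succ n
  refine ⟨u, hu, fun x hx y hy => ?_⟩
  rcases eq_or_ne x y with rfl | hxy
  · simp
  rcases le_total 0 ⟪u, x - y⟫ with h | h
  · exact (huV _ (hmemV hx hy hxy) h).le.trans (le_abs_self _)
  · have hyx := huV _ (hmemV hy hx hxy.symm) (by rw [← neg_sub, inner_neg_right]; linarith)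
    rw [← neg_sub x y, inner_neg_right, norm_neg] at hyx
    rw [abs_of_nonpos h]
    exact hyx.le

end EuclideanSpace

theorem eNorm_eq_norm_toLp {d : ℕ} (v : Fin d → ℝ) : eNorm v = ‖toLp 2 v‖ := by
  simp [eNorm, EuclideanSpace.norm_eq]

theorem eDot_eq_inner_toLp {d : ℕ} (u v : Fin d → ℝ) : eDot u v = ⟪toLp 2 u, toLp 2 v⟫ := by
  simp [eDot, PiLp.inner_apply, mul_comm]

theorem statement_4_general (N dx : ℕ) (hdx : 1 ≤ dx)
    (X : Finset (Fin dx → ℝ)) (hcard : X.card = N) :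
    ∃ u : Fin dx → ℝ, eNorm u = 1 ∧
      ∀ x ∈ X, ∀ x' ∈ X,
        (1 / (N : ℝ) ^ 2) * Real.sqrt (8 / (Real.pi * dx)) * eNorm (x - x') ≤
            |eDot u (x - x')| ∧
          |eDot u (x - x')| ≤ eNorm (x - x') := by
  obtain ⟨n, rfl⟩ : ∃ n, dx = n + 1 := ⟨dx - 1, by omega⟩
  obtain ⟨u, hu, hX⟩ :=
    EuclideanSpace.exists_norm_eq_one_forall_le_abs_inner_sub (X.image (toLp 2))
  rw [Finset.card_image_of_injective _ (toLp_injective 2), hcard] at hX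
  refine ⟨ofLp u, by rwa [eNorm_eq_norm_toLp], fun x hx x' hx' => ?_⟩
  have hxx' := hX _ (Finset.mem_image_of_mem _ hx) _ (Finset.mem_image_of_mem _ hx')
  rw [← toLp_sub] at hxx'
  rw [eDot_eq_inner_toLp, eNorm_eq_norm_toLp, toLp_ofLp]
  exact ⟨hxx', (abs_real_inner_le_norm u _).trans_eq (by rw [hu, one_mul])⟩

/-- Lemma 8: existence of a good one-dimensional projection. -/
theorem statement_4 (N dx : ℕ) (hN : 1 ≤ N) (hdx : 1 ≤ dx)
    (X : Finset (Fin dx → ℝ)) (hcard : X.card = N) :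
    ∃ u : Fin dx → ℝ, eNorm u = 1 ∧
      ∀ x ∈ X, ∀ x' ∈ X,
        (1 / (N : ℝ) ^ 2) * Real.sqrt (8 / (Real.pi * dx)) * eNorm (x - x') ≤
            |eDot u (x - x')| ∧
          |eDot u (x - x')| ≤ eNorm (x - x') :=
  statement_4_general N dx hdx X hcard
end
end

section
/- Let d ≥ 2 and N ≥ 1 be natural numbers, let v ∈ ℝ^{d}, and let u be a random vector drawn from the uniform probability distribution on the unit sphere S^{d−1} ⊂ ℝ^{d}. Then the probability that |⟨u, v⟩| < (‖v‖₂ / N²)·√(8/(π d)) is strictly less than 2/N². -/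
open Real Filter

noncomputable section

open MeasureTheory

open scoped Pointwise ENNReal

lemma gamma_sq_le5 (x : ℝ) (hx : 0 < x) :
    Gamma (x + 1/2) ^ 2 ≤ Gamma x * Gamma (x + 1) := by
  have hx1 : (0:ℝ) < x + 1 := by linarith
  have hmid : (0:ℝ) < x + 1/2 := by linarith
  have h := convexOn_log_Gamma.2 (Set.mem_Ioi.2 hx) (Set.mem_Ioi.2 hx1)
    (by norm_num : (0:ℝ) ≤ 1/2) (by norm_num : (0:ℝ) ≤ 1/2) (by norm_num)
  simp only [Function.comp_apply, smul_eq_mul] at h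
  have hc : (1/2 : ℝ) * x + (1/2 : ℝ) * (x+1) = x + 1/2 := by ring
  rw [hc] at h
  have hpos := Real.Gamma_pos_of_pos hmid
  have hpx := Real.Gamma_pos_of_pos hx
  have hpx1 := Real.Gamma_pos_of_pos hx1
  have : Real.log (Gamma (x+1/2) ^ 2) ≤ Real.log (Gamma x * Gamma (x+1)) := by
    rw [Real.log_pow, Real.log_mul hpx.ne' hpx1.ne']
    push_cast
    linarith
  exact (Real.log_le_log_iff (by positivity) (by positivity)).1 this

lemma gamma_half_bound5 (d : ℕ) (hd : 1 ≤ d) :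
    Gamma ((d:ℝ)/2 + 1) ≤ Gamma ((d+1)/2) * Real.sqrt ((d+1)/2) := by
  have hx : (0:ℝ) < (d+1)/2 := by positivity
  have h := gamma_sq_le5 ((d+1)/2) hx
  have h2 : ((d:ℝ)+1)/2 + 1/2 = (d:ℝ)/2 + 1 := by ring
  have h3 : Gamma ((d+1)/2 + 1) = ((d+1)/2) * Gamma ((d+1)/2) :=
    Real.Gamma_add_one hx.ne'
  rw [h2, h3] at h
  have hg : (0:ℝ) < Gamma ((d+1)/2) := Real.Gamma_pos_of_pos hx
  have hG1 : (0:ℝ) < Gamma ((d:ℝ)/2 + 1) := Real.Gamma_pos_of_pos (by positivity)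
  have : Gamma ((d:ℝ)/2+1) ^ 2 ≤ (Gamma ((d+1)/2) * Real.sqrt ((d+1)/2)) ^ 2 := by
    rw [mul_pow, Real.sq_sqrt hx.le]
    nlinarith [h]
  calc Gamma ((d:ℝ)/2+1) = Real.sqrt (Gamma ((d:ℝ)/2+1) ^ 2) := (Real.sqrt_sq hG1.le).symm
    _ ≤ Real.sqrt ((Gamma ((d+1)/2) * Real.sqrt ((d+1)/2)) ^ 2) := Real.sqrt_le_sqrt this
    _ = _ := Real.sqrt_sq (by positivity)

lemma key_real5 (d : ℕ) (hd : 2 ≤ d) :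
    Real.sqrt (8/(π*d)) * Gamma ((d:ℝ)/2+1) < Real.sqrt π * Gamma (((d:ℝ)+1)/2) := by
  have hd2 : (2:ℝ) ≤ (d:ℝ) := by exact_mod_cast hd
  have hπ : (3:ℝ) < π := Real.pi_gt_three
  have hg1 : 0 < Gamma (((d:ℝ)+1)/2) := Real.Gamma_pos_of_pos (by positivity)
  have h1 : Gamma ((d:ℝ)/2 + 1) ≤ Gamma (((d:ℝ)+1)/2) * Real.sqrt (((d:ℝ)+1)/2) := by
    have := gamma_half_bound5 d (le_trans one_le_two hd)
    push_cast at this ⊢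
    convert this using 3 <;> ring
  have h2 : Real.sqrt (8/(π*(d:ℝ))) * Real.sqrt (((d:ℝ)+1)/2) < Real.sqrt π := by
    rw [← Real.sqrt_mul (by positivity)]
    apply Real.sqrt_lt_sqrt (by positivity)
    rw [div_mul_eq_mul_div, div_lt_iff₀ (by positivity)]
    have h9 : (9:ℝ) < π*π := by nlinarith
    nlinarith [mul_lt_mul_of_pos_right h9 (show (0:ℝ) < (d:ℝ) by positivity)]
  calc Real.sqrt (8/(π*(d:ℝ))) * Gamma ((d:ℝ)/2+1)
      ≤ Real.sqrt (8/(π*(d:ℝ))) * (Gamma (((d:ℝ)+1)/2) * Real.sqrt (((d:ℝ)+1)/2)) :=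
        mul_le_mul_of_nonneg_left h1 (Real.sqrt_nonneg _)
    _ = (Real.sqrt (8/(π*(d:ℝ))) * Real.sqrt (((d:ℝ)+1)/2)) * Gamma (((d:ℝ)+1)/2) := by ring
    _ < Real.sqrt π * Gamma (((d:ℝ)+1)/2) := by
        exact mul_lt_mul_of_pos_right h2 hg1

lemma main_real5 (d N : ℕ) (hd : 2 ≤ d) (hN : 1 ≤ N) :
    2 * (Real.sqrt (8/(π*(d:ℝ))) / (N:ℝ)^2) * (Real.sqrt π ^ (d-1) / Gamma (((d-1:ℕ):ℝ)/2+1))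
      < (2/(N:ℝ)^2) * (Real.sqrt π ^ d / Gamma ((d:ℝ)/2+1)) := by
  have hd1 : (1:ℕ) ≤ d := le_trans one_le_two hd
  have hN0 : (0:ℝ) < (N:ℝ) := by exact_mod_cast hN
  have harg : ((d-1:ℕ):ℝ)/2 + 1 = ((d:ℝ)+1)/2 := by
    have : ((d-1:ℕ):ℝ) = (d:ℝ) - 1 := by
      push_cast [Nat.cast_sub hd1]; ring
    rw [this]; ring
  rw [harg]
  have hg1 : 0 < Gamma (((d:ℝ)+1)/2) := Real.Gamma_pos_of_pos (by positivity)
  have hg2 : 0 < Gamma ((d:ℝ)/2+1) := Real.Gamma_pos_of_pos (by positivity)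
  have key := key_real5 d hd
  have hsp : Real.sqrt π ^ d = Real.sqrt π ^ (d-1) * Real.sqrt π := by
    rw [← pow_succ]; congr 1; omega
  rw [hsp]
  have hP : 0 < Real.sqrt π ^ (d-1) := by
    apply pow_pos (Real.sqrt_pos.2 Real.pi_pos)
  have hdiv : Real.sqrt (8/(π*(d:ℝ))) / Gamma (((d:ℝ)+1)/2)
      < Real.sqrt π / Gamma ((d:ℝ)/2+1) := by
    rw [div_lt_div_iff₀ hg1 hg2]
    linarith [key]
  have hmul := mul_lt_mul_of_pos_left hdiv
    (show (0:ℝ) < 2 * Real.sqrt π ^ (d-1) / (N:ℝ)^2 by positivity)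
  calc 2 * (Real.sqrt (8/(π*(d:ℝ))) / (N:ℝ)^2) * (Real.sqrt π ^ (d-1) / Gamma (((d:ℝ)+1)/2))
      = 2 * Real.sqrt π ^ (d-1) / (N:ℝ)^2 * (Real.sqrt (8/(π*(d:ℝ))) / Gamma (((d:ℝ)+1)/2)) := by
        ring
    _ < 2 * Real.sqrt π ^ (d-1) / (N:ℝ)^2 * (Real.sqrt π / Gamma ((d:ℝ)/2+1)) := hmul
    _ = (2/(N:ℝ)^2) * (Real.sqrt π ^ (d-1) * Real.sqrt π / Gamma ((d:ℝ)/2+1)) := by ring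

lemma volT5 (d : ℕ) [NeZero d] (hd : 2 ≤ d) (c0 : ℝ) :
    (volume : Measure (EuclideanSpace ℝ (Fin d)))
      {y | |y 0| < c0 ∧ (∑ j : {j : Fin d // ¬ j = 0}, (y j)^2) < 1}
    = ENNReal.ofReal (2*c0) *
        ENNReal.ofReal (Real.sqrt π ^ (d-1) / Gamma (((d-1:ℕ):ℝ)/2+1)) := by
  classical
  letI instU : Unique {j : Fin d // j = 0} := ⟨⟨⟨0, rfl⟩⟩, fun a => Subtype.ext a.2⟩
  haveI : Nonempty {j : Fin d // ¬ j = 0} :=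
    ⟨⟨⟨1, by omega⟩, by simp [Fin.ext_iff, Fin.val_zero]⟩⟩
  have hcard : Fintype.card {j : Fin d // ¬ j = 0} = d - 1 := by
    rw [Fintype.card_subtype_compl, Fintype.card_subtype_eq, Fintype.card_fin]
  -- sets
  set S₁ : Set ({j : Fin d // j = 0} → ℝ) := {f | |f ⟨0, rfl⟩| < c0} with hS₁
  set S₂ : Set ({j : Fin d // ¬ j = 0} → ℝ) := {g | (∑ j, (g j)^2) < 1} with hS₂
  have hS₁m : MeasurableSet S₁ := by
    have he : S₁ = (fun f : {j : Fin d // j = 0} → ℝ => f ⟨0, rfl⟩) ⁻¹' Set.Ioo (-c0) c0 := by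
      ext f; simp [hS₁, abs_lt]
    rw [he]
    exact (measurable_pi_apply _) measurableSet_Ioo
  have hS₂m : MeasurableSet S₂ := by
    exact measurableSet_lt
      (f := fun g : {j : Fin d // ¬ j = 0} → ℝ => ∑ j, (g j)^2)
      (Finset.measurable_sum _ fun j _ => (measurable_pi_apply _).pow_const 2)
      measurable_const
  -- step 1: to pi space
  have h1 : (volume : Measure (EuclideanSpace ℝ (Fin d)))
      {y | |y 0| < c0 ∧ (∑ j : {j : Fin d // ¬ j = 0}, (y j)^2) < 1}
      = (volume : Measure (Fin d → ℝ))
        {y | |y 0| < c0 ∧ (∑ j : {j : Fin d // ¬ j = 0}, (y j)^2) < 1} := by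
    rw [← ((EuclideanSpace.volume_preserving_symm_measurableEquiv_toLp (Fin d)).symm).measure_preimage]
    · rfl
    · apply MeasurableSet.nullMeasurableSet
      apply MeasurableSet.inter
      · exact measurableSet_lt (f := fun y : EuclideanSpace ℝ (Fin d) => |y 0|)
          (((measurable_pi_apply 0).comp (MeasurableEquiv.toLp 2 (Fin d → ℝ)).symm.measurable).abs) measurable_const
      · exact measurableSet_lt
          (f := fun y : EuclideanSpace ℝ (Fin d) => ∑ j : {j : Fin d // ¬ j = 0}, (y j)^2)
          (Finset.measurable_sum _ fun j _ => ((measurable_pi_apply _).comp (MeasurableEquiv.toLp 2 (Fin d → ℝ)).symm.measurable).pow_const 2)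
          measurable_const
  -- step 2: split
  have h2 : (volume : Measure (Fin d → ℝ))
      {y | |y 0| < c0 ∧ (∑ j : {j : Fin d // ¬ j = 0}, (y j)^2) < 1}
      = volume S₁ * volume S₂ := by
    have hpre : {y : Fin d → ℝ | |y 0| < c0 ∧ (∑ j : {j : Fin d // ¬ j = 0}, (y j)^2) < 1}
        = (MeasurableEquiv.piEquivPiSubtypeProd (fun _ : Fin d => ℝ) (fun j => j = 0)) ⁻¹'
          (S₁ ×ˢ S₂) := rfl
    rw [hpre, (volume_preserving_piEquivPiSubtypeProd (fun _ : Fin d => ℝ)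
        (fun j => j = 0)).measure_preimage ((hS₁m.prod hS₂m).nullMeasurableSet),
      Measure.volume_eq_prod, Measure.prod_prod]
    congr!
  -- step 3: S₁ volume
  have h3 : volume S₁ = ENNReal.ofReal (2*c0) := by
    have hpre : S₁ = (MeasurableEquiv.funUnique {j : Fin d // j = 0} ℝ) ⁻¹'
        (Set.Ioo (-c0) c0) := by
      ext f
      simp only [hS₁, Set.mem_preimage, Set.mem_setOf_eq, MeasurableEquiv.funUnique,
        MeasurableEquiv.piUnique, MeasurableEquiv.coe_mk, Equiv.piUnique_apply,
        Set.mem_Ioo, ← abs_lt]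
      rfl
    rw [hpre]
    refine ((volume_preserving_funUnique {j : Fin d // j = 0} ℝ).measure_preimage
      measurableSet_Ioo.nullMeasurableSet).trans ?_
    rw [Real.volume_Ioo]
    congr 1; ring
  -- step 4: S₂ volume
  have h4 : volume S₂ = ENNReal.ofReal (Real.sqrt π ^ (d-1) / Gamma (((d-1:ℕ):ℝ)/2+1)) := by
    have hpre : ((MeasurableEquiv.toLp 2 ({j : Fin d // ¬ j = 0} → ℝ)).symm) ⁻¹' S₂
        = Metric.ball (0 : EuclideanSpace ℝ {j : Fin d // ¬ j = 0}) 1 := by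
      ext z
      simp only [Set.mem_preimage, hS₂, Set.mem_setOf_eq, Metric.mem_ball,
        dist_zero_right, EuclideanSpace.norm_eq]
      rw [Real.sqrt_lt' one_pos, one_pow]
      have hsum : ∑ i : {j : Fin d // ¬ j = 0}, ‖z i‖^2
          = ∑ j : {j : Fin d // ¬ j = 0},
              (((MeasurableEquiv.toLp 2 ({j : Fin d // ¬ j = 0} → ℝ)).symm) z j)^2 :=
        Finset.sum_congr rfl fun i _ => by rw [Real.norm_eq_abs, sq_abs]; rfl
      rw [hsum]
    rw [← (EuclideanSpace.volume_preserving_symm_measurableEquiv_toLp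
        {j : Fin d // ¬ j = 0}).measure_preimage hS₂m.nullMeasurableSet,
      hpre, EuclideanSpace.volume_ball, hcard]
    simp
  rw [h1, h2, h3, h4]

/-- key probabilistic bound of Lemma 8: for a uniformly random
unit vector `u` on the sphere, `P(|⟨u,v⟩| < (‖v‖/N²)√(8/(π d))) < 2/N²`. -/

theorem statement_5 (d : ℕ) (hd : 2 ≤ d) (N : ℕ) (hN : 1 ≤ N)
    (v : EuclideanSpace ℝ (Fin d)) :
    (((volume : Measure (EuclideanSpace ℝ (Fin d))).toSphere Set.univ)⁻¹ •
        (volume : Measure (EuclideanSpace ℝ (Fin d))).toSphere)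
      {u : Metric.sphere (0 : EuclideanSpace ℝ (Fin d)) 1 |
        |inner (𝕜 := ℝ) (u : EuclideanSpace ℝ (Fin d)) v| <
          (‖v‖ / (N : ℝ) ^ 2) * Real.sqrt (8 / (Real.pi * d))} <
      ENNReal.ofReal (2 / (N : ℝ) ^ 2) := by
  classical
  haveI : NeZero d := ⟨by omega⟩
  have htpos : (0:ℝ) < 2 / (N:ℝ)^2 := by positivity
  set S := {u : Metric.sphere (0 : EuclideanSpace ℝ (Fin d)) 1 |
        |inner (𝕜 := ℝ) (u : EuclideanSpace ℝ (Fin d)) v| <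
          (‖v‖ / (N : ℝ) ^ 2) * Real.sqrt (8 / (Real.pi * d))} with hSdef
  rw [Measure.smul_apply, smul_eq_mul]
  by_cases hv : v = 0
  · have hempty : S = ∅ := by
      ext u
      simp [hSdef, hv, inner_zero_right]
    rw [hempty, measure_empty, mul_zero]
    exact ENNReal.ofReal_pos.2 htpos
  have hvn : (0:ℝ) < ‖v‖ := norm_pos_iff.2 hv
  set c0 : ℝ := Real.sqrt (8/(π*(d:ℝ))) / (N:ℝ)^2 with hc0def
  have h8 : (0:ℝ) < 8/(π*(d:ℝ)) := by positivity
  have hc0pos : 0 < c0 := div_pos (Real.sqrt_pos.2 h8) (by positivity)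
  -- orthonormal basis adapted to v
  obtain ⟨b, hb0⟩ : ∃ b : OrthonormalBasis (Fin d) ℝ (EuclideanSpace ℝ (Fin d)),
      b 0 = ‖v‖⁻¹ • v := by
    have hw : ‖(‖v‖⁻¹ • v)‖ = 1 := norm_smul_inv_norm hv
    haveI : Subsingleton ↥({0} : Set (Fin d)) := by
      constructor; rintro ⟨a, ha⟩ ⟨c, hc⟩
      simp only [Set.mem_singleton_iff] at ha hc
      exact Subtype.ext (ha.trans hc.symm)
    have horth : Orthonormal ℝ (({0} : Set (Fin d)).restrict (fun _ => ‖v‖⁻¹ • v)) := by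
      constructor
      · intro i; exact hw
      · intro i j hij; exact absurd (Subsingleton.elim i j) hij
    obtain ⟨b, hb⟩ := horth.exists_orthonormalBasis_extension_of_card_eq
      (by simp [finrank_euclideanSpace_fin])
    exact ⟨b, hb 0 rfl⟩
  have hSmeas : MeasurableSet S := by
    exact measurableSet_lt
      (f := fun u : Metric.sphere (0 : EuclideanSpace ℝ (Fin d)) 1 =>
        |inner (𝕜 := ℝ) (u : EuclideanSpace ℝ (Fin d)) v|)
      ((Continuous.inner continuous_subtype_val continuous_const).abs.measurable)
      measurable_const
  set T : Set (EuclideanSpace ℝ (Fin d)) :=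
    {y | |y 0| < c0 ∧ (∑ j : {j : Fin d // ¬ j = 0}, (y j)^2) < 1} with hTdef
  have hmj : ∀ j : Fin d, Measurable (fun y : EuclideanSpace ℝ (Fin d) => y j) := fun j =>
    (measurable_pi_apply j).comp (MeasurableEquiv.toLp 2 (Fin d → ℝ)).symm.measurable
  have hTmeas : MeasurableSet T :=
    (measurableSet_lt (hmj 0).abs measurable_const).inter
      (measurableSet_lt
        (f := fun y : EuclideanSpace ℝ (Fin d) => ∑ j : {j : Fin d // ¬ j = 0}, (y j)^2)
        (Finset.measurable_sum _ fun j _ => (hmj j).pow_const 2) measurable_const)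
  -- the cone is contained in the slab
  have hsub : Set.Ioo (0:ℝ) 1 • (Subtype.val '' S) ⊆ ⇑b.repr ⁻¹' T := by
    rintro x hx
    rw [Set.mem_smul] at hx
    obtain ⟨r, hr, y, hy, rfl⟩ := hx
    obtain ⟨u, huS, rfl⟩ := hy
    obtain ⟨hr0, hr1⟩ := hr
    have hu1 : ‖(u : EuclideanSpace ℝ (Fin d))‖ = 1 := mem_sphere_zero_iff_norm.1 u.2
    have huS' : |inner (𝕜 := ℝ) (u : EuclideanSpace ℝ (Fin d)) v| <
        (‖v‖ / (N : ℝ) ^ 2) * Real.sqrt (8 / (Real.pi * d)) := huS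
    have hinner : |inner (𝕜 := ℝ) (u : EuclideanSpace ℝ (Fin d)) v| < ‖v‖ * c0 := by
      calc |inner (𝕜 := ℝ) (u : EuclideanSpace ℝ (Fin d)) v|
          < (‖v‖ / (N : ℝ) ^ 2) * Real.sqrt (8 / (Real.pi * d)) := huS'
        _ = ‖v‖ * c0 := by rw [hc0def]; ring
    set y : EuclideanSpace ℝ (Fin d) := b.repr (r • (u : EuclideanSpace ℝ (Fin d))) with hydef
    refine ⟨?_, ?_⟩
    · -- |y 0| < c0
      have hrep : y 0 = inner (𝕜 := ℝ) (b 0) (r • (u : EuclideanSpace ℝ (Fin d))) :=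
        b.repr_apply_apply _ _
      have hval : y 0 = ‖v‖⁻¹ * (r * inner (𝕜 := ℝ) v (u : EuclideanSpace ℝ (Fin d))) := by
        rw [hrep, hb0, real_inner_smul_left, real_inner_smul_right]
      show |y 0| < c0
      rw [hval, abs_mul, abs_mul, abs_of_pos (inv_pos.2 hvn), abs_of_pos hr0,
        real_inner_comm]
      calc ‖v‖⁻¹ * (r * |inner (𝕜 := ℝ) (u : EuclideanSpace ℝ (Fin d)) v|)
          ≤ ‖v‖⁻¹ * (r * (‖v‖ * c0)) := by
            apply mul_le_mul_of_nonneg_left _ (inv_pos.2 hvn).le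
            exact mul_le_mul_of_nonneg_left hinner.le hr0.le
        _ = r * c0 := by field_simp
        _ < c0 := by nlinarith
    · -- sum of remaining squares < 1
      have hnorm : ‖y‖ = r := by
        rw [hydef, LinearIsometryEquiv.norm_map, norm_smul, hu1, mul_one,
          Real.norm_eq_abs, abs_of_pos hr0]
      have hsq : ‖y‖^2 = ∑ i, ‖y i‖^2 := by
        rw [EuclideanSpace.norm_eq, Real.sq_sqrt (by positivity)]
      have hall : (∑ i, (y i)^2) = r^2 := by
        have : (∑ i, (y i)^2) = ∑ i, ‖y i‖^2 :=
          Finset.sum_congr rfl fun i _ => by rw [Real.norm_eq_abs, sq_abs]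
        rw [this, ← hsq, hnorm]
      have hle : (∑ j : {j : Fin d // ¬ j = 0}, (y j)^2) ≤ ∑ i, (y i)^2 := by
        rw [← Finset.sum_subtype (Finset.univ.filter (fun j : Fin d => ¬ j = 0))
          (by simp) (fun j => (y j)^2)]
        exact Finset.sum_le_sum_of_subset_of_nonneg (Finset.filter_subset _ _)
          (fun i _ _ => sq_nonneg _)
      show (∑ j : {j : Fin d // ¬ j = 0}, (y j)^2) < 1
      have : r^2 < 1 := by nlinarith
      linarith [hle, hall.le, hall.ge]
  -- measure bounds
  have key1 : (volume : Measure (EuclideanSpace ℝ (Fin d))).toSphere S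
      ≤ (d : ℝ≥0∞) * (ENNReal.ofReal (2*c0) *
          ENNReal.ofReal (Real.sqrt π ^ (d-1) / Gamma (((d-1:ℕ):ℝ)/2+1))) := by
    rw [Measure.toSphere_apply' _ hSmeas, finrank_euclideanSpace_fin]
    refine mul_le_mul_right ?_ _
    calc (volume : Measure (EuclideanSpace ℝ (Fin d)))
          (Set.Ioo (0:ℝ) 1 • (Subtype.val '' S))
        ≤ volume (⇑b.repr ⁻¹' T) := measure_mono hsub
      _ = volume T := (b.measurePreserving_repr).measure_preimage hTmeas.nullMeasurableSet
      _ = _ := volT5 d hd c0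
  have hUeq : (volume : Measure (EuclideanSpace ℝ (Fin d))).toSphere Set.univ
      = (d : ℝ≥0∞) * ENNReal.ofReal (Real.sqrt π ^ d / Gamma ((d:ℝ)/2+1)) := by
    rw [Measure.toSphere_apply_univ, finrank_euclideanSpace_fin,
      EuclideanSpace.volume_ball, Fintype.card_fin]
    simp
  have hwpos : (0:ℝ) < Real.sqrt π ^ d / Gamma ((d:ℝ)/2+1) :=
    div_pos (pow_pos (Real.sqrt_pos.2 Real.pi_pos) _)
      (Real.Gamma_pos_of_pos (by positivity))
  have hU0 : (volume : Measure (EuclideanSpace ℝ (Fin d))).toSphere Set.univ ≠ 0 := by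
    rw [hUeq]
    exact mul_ne_zero (by exact_mod_cast Nat.cast_ne_zero.2 (by omega))
      (ENNReal.ofReal_pos.2 hwpos).ne'
  have hUtop : (volume : Measure (EuclideanSpace ℝ (Fin d))).toSphere Set.univ ≠ ⊤ := by
    rw [hUeq]
    exact ENNReal.mul_ne_top (ENNReal.natCast_ne_top d) ENNReal.ofReal_ne_top
  rw [mul_comm, ← div_eq_mul_inv,
    ENNReal.div_lt_iff (Or.inl hU0) (Or.inl hUtop)]
  calc (volume : Measure (EuclideanSpace ℝ (Fin d))).toSphere S
      ≤ (d : ℝ≥0∞) * (ENNReal.ofReal (2*c0) *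
          ENNReal.ofReal (Real.sqrt π ^ (d-1) / Gamma (((d-1:ℕ):ℝ)/2+1))) := key1
    _ < ENNReal.ofReal (2 / (N:ℝ)^2) *
        ((volume : Measure (EuclideanSpace ℝ (Fin d))).toSphere Set.univ) := by
      rw [hUeq, mul_left_comm (ENNReal.ofReal (2 / (N:ℝ)^2)) (d:ℝ≥0∞)]
      apply (ENNReal.mul_lt_mul_iff_right (by exact_mod_cast Nat.cast_ne_zero.2 (by omega))
        (ENNReal.natCast_ne_top d)).2
      rw [← ENNReal.ofReal_mul (by positivity), ← ENNReal.ofReal_mul htpos.le]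
      apply ENNReal.ofReal_lt_ofReal_iff (by positivity) |>.2
      have := main_real5 d N hd hN
      calc 2*c0 * (Real.sqrt π ^ (d-1) / Gamma (((d-1:ℕ):ℝ)/2+1))
          = 2 * (Real.sqrt (8/(π*(d:ℝ))) / (N:ℝ)^2) *
            (Real.sqrt π ^ (d-1) / Gamma (((d-1:ℕ):ℝ)/2+1)) := by rw [hc0def]
        _ < (2/(N:ℝ)^2) * (Real.sqrt π ^ d / Gamma ((d:ℝ)/2+1)) := this
end
end

section
/- Let d ≥ 1 be a natural number and let X = Z_1² + ⋯ + Z_d², where Z_1, …, Z_d are i.i.d. standard normal random variables (so X is chi-square distributed with d degrees of freedom). Then for every real z with 0 < z < 1: P(X < z·d) ≤ (z·e^{1−z})^{d/2}. -/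
open Real Filter

noncomputable section

open MeasureTheory ProbabilityTheory

open scoped NNReal ENNReal

private lemma map_eval_pi_gauss {d : ℕ} (i : Fin d) :
    (Measure.pi fun _ : Fin d => gaussianReal 0 1).map (fun ω => ω i) = gaussianReal 0 1 := by
  refine Measure.ext fun s hs => ?_
  rw [Measure.map_apply (measurable_pi_apply i) hs, ← Set.univ_pi_update_univ, Measure.pi_pi]
  rw [Finset.prod_eq_single i (fun j _ hj => by simp [Function.update_of_ne hj])
    (by simp)]
  simp

private lemma iIndep_eval_pi_gauss {d : ℕ} :
    iIndepFun
      (fun i (ω : Fin d → ℝ) => ω i) (Measure.pi fun _ : Fin d => gaussianReal 0 1) := by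
  rw [iIndepFun_iff_measure_inter_preimage_eq_mul]
  intro S sets hsets
  classical
  have h1 : (⋂ i ∈ S, (fun ω : Fin d → ℝ => ω i) ⁻¹' sets i)
      = Set.pi Set.univ (fun i => if i ∈ S then sets i else Set.univ) := by
    ext ω
    simp only [Set.mem_iInter, Set.mem_preimage, Set.mem_pi, Set.mem_univ, true_implies]
    constructor
    · intro h i; split <;> simp_all
    · intro h i hi; have := h i; simp_all
  rw [h1, Measure.pi_pi]
  have h2 : ∀ i ∈ S, (Measure.pi fun _ : Fin d => gaussianReal 0 1)
      ((fun ω : Fin d → ℝ => ω i) ⁻¹' sets i) = gaussianReal 0 1 (sets i) := by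
    intro i hi
    have h := Measure.map_apply (μ := Measure.pi fun _ : Fin d => gaussianReal 0 1)
      (measurable_pi_apply i) (hsets i hi)
    rw [← h, map_eval_pi_gauss]
  rw [Finset.prod_congr rfl h2]
  have : ∀ i : Fin d, gaussianReal 0 1 (if i ∈ S then sets i else Set.univ)
      = if i ∈ S then gaussianReal 0 1 (sets i) else 1 := by
    intro i; split <;> simp
  rw [Finset.prod_congr rfl (fun i _ => this i), Finset.prod_ite_mem, Finset.univ_inter]

lemma integral_exp_neg_mul_sq_gauss {t : ℝ} (ht : 0 < t) :
    ∫ x, Real.exp (-t * x ^ 2) ∂(gaussianReal 0 1) = (Real.sqrt (1 + 2 * t))⁻¹ := by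
  rw [gaussianReal_of_var_ne_zero 0 one_ne_zero, gaussianPDF_def]
  have hd : (fun x => ENNReal.ofReal (gaussianPDFReal 0 1 x))
      = fun x => ((Real.toNNReal (gaussianPDFReal 0 1 x) : ℝ≥0) : ℝ≥0∞) := rfl
  rw [hd, integral_withDensity_eq_integral_smul
    ((measurable_gaussianPDFReal 0 1).real_toNNReal) (fun x => Real.exp (-t * x ^ 2))]
  have heq : ∀ x : ℝ, (Real.toNNReal (gaussianPDFReal 0 1 x)) • Real.exp (-t * x ^ 2)
      = (Real.sqrt (2 * π))⁻¹ * Real.exp (-(t + 1/2) * x ^ 2) := by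
    intro x
    rw [NNReal.smul_def, smul_eq_mul, Real.coe_toNNReal _ (gaussianPDFReal_nonneg 0 1 x),
      gaussianPDFReal]
    rw [mul_assoc, ← Real.exp_add]
    congr 1
    · norm_num
    · congr 1; push_cast; ring
  simp_rw [heq]
  rw [integral_const_mul, integral_gaussian]
  have h3 : (0:ℝ) < t + 1/2 := by linarith
  rw [← Real.sqrt_inv, ← Real.sqrt_inv,
    ← Real.sqrt_mul (by positivity : (0:ℝ) ≤ (2*π)⁻¹)]
  congr 1
  field_simp
  ring

/-- Chernoff lower-tail bound for the chi-square distribution. -/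
theorem statement_7 (d : ℕ) (hd : 1 ≤ d) (z : ℝ) (hz0 : 0 < z) (hz1 : z < 1) :
    (Measure.pi fun _ : Fin d => gaussianReal 0 1)
        {ω : Fin d → ℝ | ∑ i, (ω i) ^ 2 < z * d} ≤
      ENNReal.ofReal ((z * Real.exp (1 - z)) ^ ((d : ℝ) / 2)) := by
  set μ : Measure (Fin d → ℝ) := Measure.pi fun _ : Fin d => gaussianReal 0 1 with hμ
  set t₀ : ℝ := -((1 - z) / (2 * z)) with ht₀def
  have hzne : z ≠ 0 := ne_of_gt hz0
  have ht' : 0 < (1 - z) / (2 * z) := div_pos (by linarith) (by linarith)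
  have ht₀ : t₀ ≤ 0 := by rw [ht₀def]; linarith
  have hindep : iIndepFun
      (fun i (ω : Fin d → ℝ) => (ω i) ^ 2) μ :=
    iIndepFun.comp iIndep_eval_pi_gauss (fun _ x => x ^ 2) (fun _ => by fun_prop)
  have hmeas : ∀ i : Fin d, Measurable (fun ω : Fin d → ℝ => (ω i) ^ 2) :=
    fun i => (measurable_pi_apply i).pow_const 2
  have hbound : ∀ (s : ℝ), 0 ≤ s → Real.exp (t₀ * s) ≤ 1 := by
    intro s hs
    rw [← Real.exp_zero]
    exact Real.exp_le_exp.mpr (mul_nonpos_of_nonpos_of_nonneg ht₀ hs)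
  have hint : Integrable (fun ω : Fin d → ℝ => Real.exp (t₀ * ∑ i, (ω i) ^ 2)) μ := by
    refine Integrable.mono' (integrable_const 1) ?_ ?_
    · exact (Measurable.aestronglyMeasurable (by fun_prop))
    · refine Filter.Eventually.of_forall fun ω => ?_
      rw [Real.norm_of_nonneg (Real.exp_nonneg _)]
      exact hbound _ (Finset.sum_nonneg fun i _ => sq_nonneg _)
  have hmgf_i : ∀ i : Fin d, mgf (fun ω : Fin d → ℝ => (ω i) ^ 2) μ t₀ = Real.sqrt z := by
    intro i
    have hmap : ∫ ω, Real.exp (t₀ * (ω i) ^ 2) ∂μ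
        = ∫ x, Real.exp (t₀ * x ^ 2) ∂(gaussianReal 0 1) := by
      have h := integral_map (μ := μ) (φ := fun ω : Fin d → ℝ => ω i)
        (measurable_pi_apply i).aemeasurable
        (f := fun x : ℝ => Real.exp (t₀ * x ^ 2))
        (((measurable_id.pow_const 2).const_mul t₀).exp.aestronglyMeasurable)
      rw [map_eval_pi_gauss i] at h
      exact h.symm
    rw [mgf, hmap]
    have hfun : (fun x : ℝ => Real.exp (t₀ * x ^ 2))
        = fun x : ℝ => Real.exp (-((1 - z) / (2 * z)) * x ^ 2) := by
      rw [ht₀def]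
    rw [hfun, integral_exp_neg_mul_sq_gauss ht']
    have hz' : 1 + 2 * ((1 - z) / (2 * z)) = z⁻¹ := by field_simp; ring
    rw [hz', Real.sqrt_inv, inv_inv]
  have hsum : (fun ω : Fin d → ℝ => ∑ i, (ω i) ^ 2)
      = ∑ i : Fin d, (fun ω : Fin d → ℝ => (ω i) ^ 2) := by
    ext ω; simp
  have hchern := measure_le_le_exp_mul_mgf (μ := μ)
    (X := fun ω : Fin d → ℝ => ∑ i, (ω i) ^ 2) (z * d) ht₀ hint
  rw [hsum, iIndepFun.mgf_sum hindep hmeas Finset.univ] at hchern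
  rw [Finset.prod_congr rfl (fun i _ => hmgf_i i), Finset.prod_const, Finset.card_univ,
    Fintype.card_fin] at hchern
  have hkey : Real.exp (-t₀ * (z * d)) * Real.sqrt z ^ d
      = (z * Real.exp (1 - z)) ^ ((d : ℝ) / 2) := by
    have e1 : (Real.sqrt z) ^ d = z ^ ((d:ℝ)/2) := by
      rw [← Real.rpow_natCast (Real.sqrt z) d, Real.sqrt_eq_rpow, ← Real.rpow_mul hz0.le,
        show (1/2 : ℝ) * d = (d:ℝ)/2 by ring]
    have e2 : Real.exp (-t₀ * (z * d)) = (Real.exp (1 - z)) ^ ((d:ℝ)/2) := by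
      rw [← Real.exp_mul]
      congr 1
      rw [ht₀def]
      field_simp
    rw [e1, e2, ← Real.mul_rpow (Real.exp_nonneg _) hz0.le]
    congr 1
    ring
  rw [hkey] at hchern
  have hne : μ {ω : Fin d → ℝ | ∑ i, (ω i) ^ 2 < z * d} ≠ ⊤ := measure_ne_top _ _
  refine (ENNReal.le_ofReal_iff_toReal_le hne (Real.rpow_nonneg (by positivity) _)).mpr ?_
  refine le_trans ?_ hchern
  exact ENNReal.toReal_mono (measure_ne_top _ _) (measure_mono (Set.setOf_subset_setOf.mpr fun ω h => le_of_lt h))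
end
end

section
/- For any sigmoidal activation function σ and any ε > 0 and δ > 0, there exist real numbers a, b, c such that |a·σ(c·x) + b − 𝟙[x ≥ 0]| < ε for all x ∈ ℝ with x ∉ [−δ, δ], where 𝟙[x ≥ 0] equals 1 if x ≥ 0 and 0 otherwise. -/
open Real Filter

noncomputable section

/-- Claim 2: a single sigmoidal neuron approximates the step
function away from the origin. -/
theorem statement_9 (σ : ℝ → ℝ) (hσ : Sigmoidal σ) (ε δ : ℝ) (hε : 0 < ε)
    (hδ : 0 < δ) :
    ∃ a b c : ℝ, ∀ x : ℝ, x ∉ Set.Icc (-δ) δ →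
      |a * σ (c * x) + b - stepFun x| < ε := by
  obtain ⟨⟨L, U, hbot, htop, hne⟩, -⟩ := hσ
  have hd : U - L ≠ 0 := sub_ne_zero.mpr (Ne.symm hne)
  set a : ℝ := 1 / (U - L) with ha
  set b : ℝ := -L / (U - L) with hb
  set f : ℝ → ℝ := fun y => a * σ y + b with hf
  have htop' : Tendsto f atTop (nhds 1) := by
    have : Tendsto f atTop (nhds (a * U + b)) :=
      (htop.const_mul a).add_const b
    convert this using 2
    rw [ha, hb, div_mul_eq_mul_div, one_mul, ← add_div, ← sub_eq_add_neg, div_self hd]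
  have hbot' : Tendsto f atBot (nhds 0) := by
    have : Tendsto f atBot (nhds (a * L + b)) :=
      (hbot.const_mul a).add_const b
    convert this using 2
    rw [ha, hb, div_mul_eq_mul_div, one_mul, ← add_div, add_neg_cancel, zero_div]
  obtain ⟨M, hM⟩ := (eventually_atTop).mp
    (Metric.tendsto_nhds.mp htop' ε hε)
  obtain ⟨N, hN⟩ := (eventually_atBot).mp
    (Metric.tendsto_nhds.mp hbot' ε hε)
  set K : ℝ := max M (-N) with hK
  set c : ℝ := (|K| + 1) / δ with hc
  refine ⟨a, b, c, ?_⟩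
  intro x hx
  rw [Set.mem_Icc, not_and_or] at hx
  have hc0 : 0 < c := div_pos (by positivity) hδ
  rcases hx with hx | hx
  · push_neg at hx
    have hx' : x < -δ := by linarith
    have hcx : c * x ≤ N := by
      have h1 : c * x < c * (-δ) := by
        exact (mul_lt_mul_iff_right₀ hc0).mpr hx'
      have h2 : c * (-δ) = -(|K| + 1) := by
        rw [hc, mul_neg, div_mul_cancel₀ _ hδ.ne']
      have h3 : -(|K| + 1) ≤ N := by
        have : -N ≤ K := le_max_right _ _
        have : -N ≤ |K| := this.trans (le_abs_self K)
        linarith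
      linarith
    have := hN (c * x) hcx
    rw [Real.dist_eq] at this
    have hstep : stepFun x = 0 := by
      simp [stepFun, not_le.mpr (by linarith : x < 0)]
    rw [hstep]
    simpa using this
  · push_neg at hx
    have hcx : M ≤ c * x := by
      have h1 : c * δ < c * x := (mul_lt_mul_iff_right₀ hc0).mpr hx
      have h2 : c * δ = |K| + 1 := by
        rw [hc, div_mul_cancel₀ _ hδ.ne']
      have h3 : M ≤ |K| + 1 := by
        have : M ≤ K := le_max_left _ _
        have := this.trans (le_abs_self K)
        linarith
      linarith
    have := hM (c * x) hcx
    rw [Real.dist_eq] at this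
    have hstep : stepFun x = 1 := by
      simp [stepFun, (by linarith : (0:ℝ) ≤ x)]
    rw [hstep]
    exact this
end
end

section
/- For any finite set X ⊂ ℝ^{d_0}, any ε > 0, any Step+Id network f with L hidden layers of widths d_1, …, d_L, input dimension d_0 and output dimension 1, and any sigmoidal activation function σ, there exists a σ network g with the same architecture (L hidden layers of widths d_1, …, d_L, input dimension d_0, output dimension 1) such that |f(x) − g(x)| < ε for all x ∈ X. -/
open Real Filter

noncomputable section

/-!
Each hidden neuron of a Step+Id network can be imitated, up to affine maps before and after it,
by a single σ neuron: `σ (n (u + β))` rescaled tends to `Step u` as `n → ∞` (with a small shift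
`β > 0` keeping the finitely many negative pre-activations negative), and the difference quotient
`n (σ (z + u / n) - σ z) / σ'(z)` tends to `u`. Both limits hold jointly in `n → ∞` and
`u → u₀`, and the affine maps around each neuron are absorbed into those of the architecture;
induction on the layers then propagates the approximation to the output.
-/

open Topology

lemma IsAffineVecMap.comp {m n p : ℕ} {t : (Fin m → ℝ) → (Fin n → ℝ)}
    {s : (Fin n → ℝ) → (Fin p → ℝ)} (hs : IsAffineVecMap s) (ht : IsAffineVecMap t) :
    IsAffineVecMap (s ∘ t) := by
  obtain ⟨W₁, b₁, h₁⟩ := ht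
  obtain ⟨W₂, b₂, h₂⟩ := hs
  refine ⟨W₂ * W₁, W₂.mulVec b₁ + b₂, fun x => ?_⟩
  rw [Function.comp_apply, h₂, h₁, Matrix.mulVec_add, Matrix.mulVec_mulVec, add_assoc]

lemma IsAffineVecMap.continuous {m n : ℕ} {t : (Fin m → ℝ) → (Fin n → ℝ)}
    (ht : IsAffineVecMap t) : Continuous t := by
  obtain ⟨W, b, h⟩ := ht
  rw [funext h]
  exact (continuous_const.matrix_mulVec continuous_id).add continuous_const

lemma isAffineVecMap_coordwise {n : ℕ} (c e : Fin n → ℝ) :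
    IsAffineVecMap fun (w : Fin n → ℝ) i => c i * w i + e i :=
  ⟨Matrix.diagonal c, e, fun w => by ext i; simp [Matrix.mulVec_diagonal]⟩

lemma IsNet.comp_isAffineVecMap {σ : ℝ → ℝ} {d dout : ℕ} {ds : List ℕ}
    {g : (Fin d → ℝ) → (Fin dout → ℝ)} {A : (Fin d → ℝ) → (Fin d → ℝ)}
    (hg : IsNet σ d ds dout g) (hA : IsAffineVecMap A) : IsNet σ d ds dout (g ∘ A) := by
  cases ds with
  | nil => exact IsAffineVecMap.comp hg hA
  | cons e es =>
    obtain ⟨t, g', ht, hg', hfac⟩ := hg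
    exact ⟨t ∘ A, g', ht.comp hA, hg', fun x => hfac (A x)⟩

lemma tendsto_sigmoid_step {σ : ℝ → ℝ} {a b : ℝ} (ha : Tendsto σ atBot (𝓝 a))
    (hb : Tendsto σ atTop (𝓝 b)) (hab : a ≠ b) {β s : ℝ} (hβ : 0 < β)
    (hsβ : s < 0 → s + β < 0) :
    Tendsto (fun p : ℝ × ℝ => (σ (p.1 * (p.2 + β)) - a) / (b - a))
      (atTop ×ˢ 𝓝 s) (𝓝 (stepFun s)) := by
  have hshift : Tendsto (fun p : ℝ × ℝ => p.2 + β) (atTop ×ˢ 𝓝 s) (𝓝 (s + β)) :=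
    tendsto_snd.add_const β
  by_cases hs : 0 ≤ s
  · have hσ := hb.comp (tendsto_fst.atTop_mul_pos (by linarith) hshift)
    have hba : b - a ≠ 0 := sub_ne_zero.2 hab.symm
    simpa [stepFun, hs, hba] using (hσ.sub_const a).div_const (b - a)
  · have hσ := ha.comp (tendsto_fst.atTop_mul_neg (hsβ (not_le.1 hs)) hshift)
    simpa [stepFun, hs] using (hσ.sub_const a).div_const (b - a)

/-- Since `σ (z + v) - σ z = v * dslope σ z (z + v)`, the quotient equals
`u * dslope σ z (z + u / n) / σ'(z)`, and `dslope σ z` is continuous at `z`. -/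
lemma tendsto_mul_sub_div_deriv {σ : ℝ → ℝ} {z : ℝ} (hσ : DifferentiableAt ℝ σ z)
    (hz : deriv σ z ≠ 0) (s : ℝ) :
    Tendsto (fun p : ℝ × ℝ => p.1 * (σ (p.1⁻¹ * p.2 + z) - σ z) / deriv σ z)
      (atTop ×ˢ 𝓝 s) (𝓝 s) := by
  have hdslope : Tendsto (fun p : ℝ × ℝ => p.2 * dslope σ z (p.1⁻¹ * p.2 + z) / deriv σ z)
      (atTop ×ˢ 𝓝 s) (𝓝 (s * deriv σ z / deriv σ z)) := by
    have hsmall : Tendsto (fun p : ℝ × ℝ => p.1⁻¹ * p.2 + z) (atTop ×ˢ 𝓝 s) (𝓝 z) := by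
      simpa using ((tendsto_inv_atTop_zero.comp tendsto_fst).mul tendsto_snd).add_const z
    rw [← dslope_same]
    exact (tendsto_snd.mul ((continuousAt_dslope_same.2 hσ).tendsto.comp hsmall)).div_const _
  rw [mul_div_cancel_right₀ s hz] at hdslope
  refine hdslope.congr' ?_
  filter_upwards [tendsto_fst.eventually (eventually_ne_atTop 0)] with p hp
  have h := sub_smul_dslope σ z (p.1⁻¹ * p.2 + z)
  rw [add_sub_cancel_right, smul_eq_mul] at h
  rw [← h, ← mul_assoc, ← mul_assoc, mul_inv_cancel₀ hp, one_mul]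

lemma exists_pos_forall_add_neg (S : Finset ℝ) : ∃ β > 0, ∀ s ∈ S, s < 0 → s + β < 0 := by
  have hsmall : ∀ s ∈ S, ∀ᶠ β in 𝓝[>] (0 : ℝ), s < 0 → s + β < 0 := by
    intro s _
    by_cases hs : s < 0
    · exact eventually_nhdsWithin_of_eventually_nhds <|
        (eventually_lt_nhds (neg_pos.2 hs)).mono fun β hβ _ => by linarith
    · exact Eventually.of_forall fun _ h => absurd h hs
  exact (eventually_mem_nhdsWithin.and ((eventually_all_finset S).2 hsmall)).exists

lemma Sigmoidal.exists_neuron_tendsto {σ : ℝ → ℝ} (hσ : Sigmoidal σ) (φ : Bool) (S : Finset ℝ) :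
    ∃ α β γ κ : ℝ → ℝ, ∀ s ∈ S,
      Tendsto (fun p : ℝ × ℝ => γ p.1 * σ (α p.1 * p.2 + β p.1) + κ p.1)
        (atTop ×ˢ 𝓝 s) (𝓝 (if φ then stepFun s else s)) := by
  obtain ⟨⟨a, b, ha, hb, hab⟩, z, hσz, hz⟩ := hσ
  cases φ with
  | true =>
    obtain ⟨β, hβ, hSβ⟩ := exists_pos_forall_add_neg S
    refine ⟨id, (· * β), fun _ => (b - a)⁻¹, fun _ => -a * (b - a)⁻¹, fun s hs => ?_⟩
    rw [if_pos rfl]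
    convert tendsto_sigmoid_step ha hb hab hβ (hSβ s hs) using 2 with p
    simp only [id, mul_add]
    ring
  | false =>
    refine ⟨(·⁻¹), fun _ => z, (· / deriv σ z), fun n => -(n * σ z / deriv σ z),
      fun s _ => ?_⟩
    rw [if_neg Bool.false_ne_true]
    convert tendsto_mul_sub_div_deriv (hσz.differentiableAt one_ne_zero) hz s using 2 with p
    ring

lemma Sigmoidal.exists_layer_tendsto {σ : ℝ → ℝ} (hσ : Sigmoidal σ) {d : ℕ} (φ : Fin d → Bool)
    (S : Finset (Fin d → ℝ)) :
    ∃ α β γ κ : ℝ → Fin d → ℝ, ∀ w ∈ S,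
      Tendsto
        (fun p : ℝ × (Fin d → ℝ) => fun i => γ p.1 i * σ (α p.1 i * p.2 i + β p.1 i) + κ p.1 i)
        (atTop ×ˢ 𝓝 w) (𝓝 fun i => if φ i then stepFun (w i) else w i) := by
  choose α β γ κ h using fun i => hσ.exists_neuron_tendsto (φ i) (S.image (· i))
  refine ⟨fun n i => α i n, fun n i => β i n, fun n i => γ i n, fun n i => κ i n,
    fun w hw => tendsto_pi_nhds.2 fun i => ?_⟩
  exact (h i (w i) (Finset.mem_image_of_mem _ hw)).comp
    (tendsto_id.prodMap ((continuous_apply i).tendsto w))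

/-- Closeness on neighbourhoods, not only at the points of `Y`, is what lets the induction pass
through a hidden layer whose σ outputs merely approximate the Step/Id outputs. -/
theorem IsStepIdNet.exists_isNet_eventually_dist_lt {σ : ℝ → ℝ} (hσ : Sigmoidal σ) {ws : List ℕ} :
    ∀ {din dout : ℕ} {f : (Fin din → ℝ) → (Fin dout → ℝ)}, IsStepIdNet din ws dout f →
      ∀ (Y : Finset (Fin din → ℝ)) {ε : ℝ}, 0 < ε →
        ∃ g, IsNet σ din ws dout g ∧ ∀ y ∈ Y, ∀ᶠ y' in 𝓝 y, dist (g y') (f y) < ε := by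
  induction ws with
  | nil =>
    intro din dout f hf Y ε hε
    exact ⟨f, hf, fun y _ => Metric.tendsto_nhds.1 (hf.continuous.tendsto y) ε hε⟩
  | cons d ds ih =>
    intro din dout f hf Y ε hε
    obtain ⟨t, φ, g, ht, hg, hfac⟩ := hf
    set act : (Fin d → ℝ) → (Fin d → ℝ) := fun w i => if φ i then stepFun (w i) else w i
    obtain ⟨g', hg'net, hg'⟩ := ih hg (Y.image (act ∘ t)) hε
    obtain ⟨α, β, γ, κ, hlayer⟩ := hσ.exists_layer_tendsto φ (Y.image t)
    have hclose : ∀ᶠ n in atTop, ∀ y ∈ Y, ∀ᶠ y' in 𝓝 y,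
        dist (g' fun i => γ n i * σ (α n i * t y' i + β n i) + κ n i) (f y) < ε := by
      refine (eventually_all_finset Y).2 fun y hy => ?_
      suffices h : ∀ᶠ q in (atTop : Filter ℝ) ×ˢ 𝓝 y,
          dist (g' fun i => γ q.1 i * σ (α q.1 i * t q.2 i + β q.1 i) + κ q.1 i) (f y) < ε from
        h.curry
      have hinner : Tendsto (Prod.map id t) ((atTop : Filter ℝ) ×ˢ 𝓝 y) (atTop ×ˢ 𝓝 (t y)) :=
        tendsto_id.prodMap (ht.continuous.tendsto y)
      rw [hfac y]
      exact ((hlayer (t y) (Finset.mem_image_of_mem t hy)).comp hinner).eventually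
        (hg' (act (t y)) (Finset.mem_image_of_mem (act ∘ t) hy))
    obtain ⟨n, hn⟩ := hclose.exists
    refine ⟨_, ⟨fun x i => α n i * t x i + β n i, fun v => g' fun i => γ n i * v i + κ n i,
      (isAffineVecMap_coordwise (α n) (β n)).comp ht,
      hg'net.comp_isAffineVecMap (isAffineVecMap_coordwise (γ n) (κ n)), fun _ => rfl⟩, hn⟩

/-- Lemma 5: any Step+Id network can be approximated on a
finite set by a sigmoidal network of the same architecture. -/
theorem statement_11 (d0 : ℕ) (X : Finset (Fin d0 → ℝ)) (ε : ℝ) (hε : 0 < ε)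
    (ws : List ℕ) (f : (Fin d0 → ℝ) → (Fin 1 → ℝ)) (hf : IsStepIdNet d0 ws 1 f)
    (σ : ℝ → ℝ) (hσ : Sigmoidal σ) :
    ∃ g : (Fin d0 → ℝ) → (Fin 1 → ℝ), IsNet σ d0 ws 1 g ∧
      ∀ x ∈ X, |f x 0 - g x 0| < ε := by
  obtain ⟨g, hg, hclose⟩ := hf.exists_isNet_eventually_dist_lt hσ X hε
  refine ⟨g, hg, fun x hx => ?_⟩
  rw [abs_sub_comm, ← Real.dist_eq]
  exact (dist_le_pi_dist (g x) (f x) 0).trans_lt (hclose x hx).self_of_nhds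
end
end

section
/- For any N, K, d ∈ ℕ with N, K, d ≥ 1 and any finite set X ⊂ ℝ such that {⌊x⌋ : x ∈ X} consists of exactly N distinct integers, all contained in {0, 1, …, K−1}, there exists a Step+Id network f with 1 hidden layer of width d, input dimension 1 and output dimension 1, such that {⌊f(x)⌋ : x ∈ X} consists of exactly N distinct integers, all contained in {0, 1, …, T−1}, where T := max{⌈K/⌊(d+1)/2⌋⌉, ⌊N²/4 + 1⌋}. -/
open Real Filter

noncomputable section

namespace S12Aux

def jsum (L : List (ℤ × ℤ)) (v : ℤ) : ℤ :=
  (L.map (fun p => if p.1 ≤ v then p.2 else 0)).sum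

lemma jsum_cons (p : ℤ × ℤ) (L : List (ℤ × ℤ)) (v : ℤ) :
    jsum (p :: L) v = (if p.1 ≤ v then p.2 else 0) + jsum L v := by simp [jsum]

lemma jsum_eq_zero (L : List (ℤ × ℤ)) (v : ℤ) (h : ∀ p ∈ L, v < p.1) : jsum L v = 0 := by
  induction L with
  | nil => rfl
  | cons p L ih =>
    rw [jsum_cons, if_neg (by exact not_le.2 (h p List.mem_cons_self))]
    rw [ih (fun q hq => h q (List.mem_cons_of_mem _ hq))]
    ring


lemma sum_getD (v : ℤ) : ∀ (L : List (ℤ × ℤ)) (n : ℕ), L.length ≤ n →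
    ∑ j ∈ Finset.range n,
      (if (L.getD j (0,0)).1 ≤ v then (L.getD j (0,0)).2 else 0) = jsum L v := by
  intro L
  induction L with
  | nil =>
    intro n _
    apply Finset.sum_eq_zero
    intro j _
    simp
  | cons p L ih =>
    intro n hn
    obtain ⟨n', rfl⟩ : ∃ n', n = n' + 1 := ⟨n - 1, by simp at hn; omega⟩
    rw [Finset.sum_range_succ']
    simp only [List.getD_cons_succ, List.getD_cons_zero]
    rw [ih n' (by simpa using hn), jsum_cons]
    ring

lemma exists_not_mem_of_card_lt (bad : Finset ℤ) (T : ℤ) (h : (bad.card : ℤ) < T) :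
    ∃ s, 0 ≤ s ∧ s < T ∧ s ∉ bad := by
  have hc : bad.card < (Finset.Ico (0:ℤ) T).card := by
    rw [Int.card_Ico]; omega
  have : ¬ (Finset.Ico (0:ℤ) T ⊆ bad) := fun hsub => absurd (Finset.card_le_card hsub) (by omega)
  obtain ⟨s, hsIco, hsbad⟩ := Finset.not_subset.1 this
  rw [Finset.mem_Ico] at hsIco
  exact ⟨s, hsIco.1, hsIco.2, hsbad⟩

lemma core (T : ℤ) (hT : 0 < T) :
    ∀ (r : ℕ) (a base : ℤ) (V U : Finset ℤ),
      (∀ v ∈ V, a ≤ v ∧ v < a + r * T) →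
      (∀ u ∈ U, 0 ≤ u ∧ u < T) →
      ((V.card : ℤ) + U.card) ^ 2 < 4 * T →
      ∃ L : List (ℤ × ℤ), L.length ≤ 2 * r ∧ (∀ p ∈ L, a ≤ p.1) ∧
        (∀ v ∈ V, (0 ≤ v + base + jsum L v ∧ v + base + jsum L v < T) ∧
          (v + base + jsum L v) ∉ U) ∧
        Set.InjOn (fun v => v + base + jsum L v) (V : Set ℤ) := by
  intro r
  induction r with
  | zero =>
    intro a base V U hV hU hinv
    have hVe : V = ∅ := by
      rw [Finset.eq_empty_iff_forall_notMem]
      intro v hv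
      have := hV v hv
      omega
    exact ⟨[], by simp, by simp, by simp [hVe], by simp [hVe]⟩
  | succ r ih =>
    intro a base V U hV hU hinv
    rcases V.eq_empty_or_nonempty with hVe | hVne
    · exact ⟨[], by simp, by simp, by simp [hVe], by simp [hVe]⟩
    set lo := V.min' hVne with hlo
    have hloV : lo ∈ V := V.min'_mem hVne
    have halo : a ≤ lo := (hV lo hloV).1
    set B := V.filter (fun v => v < lo + T) with hB
    have hBV : B ⊆ V := Finset.filter_subset _ _
    have hBmem : ∀ v ∈ B, lo ≤ v ∧ v < lo + T := by
      intro v hv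
      rw [hB, Finset.mem_filter] at hv
      exact ⟨V.min'_le v hv.1, hv.2⟩
    set V' := V \ B with hV'
    have hV'mem : ∀ v ∈ V', lo + T ≤ v := by
      intro v hv
      rw [hV', Finset.mem_sdiff, hB, Finset.mem_filter] at hv
      have h2 := hv.2
      push_neg at h2
      exact h2 hv.1
    -- choose the shift s
    set bad := (B ×ˢ U).image (fun p => (p.2 - p.1 + lo) % T) with hbad
    have hbadcard : (bad.card : ℤ) < T := by
      have h1 : bad.card ≤ B.card * U.card :=
        Finset.card_image_le.trans (le_of_eq (Finset.card_product _ _))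
      have h2 : B.card ≤ V.card := Finset.card_le_card hBV
      have h5 : (bad.card : ℤ) ≤ (B.card : ℤ) * U.card := by exact_mod_cast h1
      have h2' : (B.card : ℤ) ≤ V.card := by exact_mod_cast h2
      have hU0 : (0:ℤ) ≤ U.card := Int.natCast_nonneg _
      have hB0 : (0:ℤ) ≤ B.card := Int.natCast_nonneg _
      have e1 : 4 * ((B.card : ℤ) * U.card) ≤ ((B.card : ℤ) + U.card) ^ 2 := by nlinarith [sq_nonneg ((B.card : ℤ) - U.card)]
      have e2 : ((B.card : ℤ) + U.card) ^ 2 ≤ ((V.card : ℤ) + U.card) ^ 2 := by nlinarith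
      linarith
    obtain ⟨s, hs0, hsT, hsbad⟩ := exists_not_mem_of_card_lt bad T hbadcard
    set gB : ℤ → ℤ := fun v => (v - lo + s) % T with hgB
    have hgood : ∀ v ∈ B, ∀ u ∈ U, gB v ≠ u := by
      intro v hv u hu heq
      apply hsbad
      rw [hbad, Finset.mem_image]
      refine ⟨(v, u), Finset.mem_product.2 ⟨hv, hu⟩, ?_⟩
      have h1 : Int.ModEq T (v - lo + s) u := by
        show (v - lo + s) % T = u % T
        rw [Int.emod_eq_of_lt (hU u hu).1 (hU u hu).2]
        exact heq
      have h2 : (u - v + lo) % T = s % T := by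
        have h := (h1.symm).sub_right (v - lo)
        simpa [Int.ModEq, show u - (v - lo) = u - v + lo by ring,
          show (v - lo + s) - (v - lo) = s by ring] using h
      rw [h2]
      exact Int.emod_eq_of_lt hs0 hsT
    have hgBrange : ∀ v ∈ B, 0 ≤ gB v ∧ gB v < T := by
      intro v _
      exact ⟨Int.emod_nonneg _ (ne_of_gt hT), Int.emod_lt_of_pos _ hT⟩
    have hgBinj : ∀ v ∈ B, ∀ v' ∈ B, gB v = gB v' → v = v' := by
      intro v hv v' hv' he
      have hdvd : T ∣ v' - v := by
        have hm : Int.ModEq T (v - lo + s) (v' - lo + s) := he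
        have := hm.dvd
        simpa [show (v' - lo + s) - (v - lo + s) = v' - v by ring] using this
      have h1 := hBmem v hv
      have h2 := hBmem v' hv'
      have := Int.eq_zero_of_abs_lt_dvd hdvd (by rw [abs_lt]; omega)
      omega
    set UB := B.image gB with hUB
    have hUBnotU : ∀ x ∈ UB, x ∉ U := by
      intro x hx
      rw [hUB, Finset.mem_image] at hx
      obtain ⟨v, hv, rfl⟩ := hx
      intro hxU
      exact hgood v hv _ hxU rfl
    have hdisj : Disjoint U UB := Finset.disjoint_right.2 hUBnotU
    have hUBcard : UB.card = B.card :=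
      Finset.card_image_of_injOn (fun v hv v' hv' => hgBinj v hv v' hv')
    have hcards : V'.card + (U ∪ UB).card = V.card + U.card := by
      have h1 : (U ∪ UB).card = U.card + UB.card := Finset.card_union_of_disjoint hdisj
      have h2 : V'.card + B.card = V.card := Finset.card_sdiff_add_card_eq_card hBV
      omega
    have hinv' : ((V'.card : ℤ) + (U ∪ UB).card) ^ 2 < 4 * T := by
      have : ((V'.card : ℤ) + (U ∪ UB).card) = ((V.card : ℤ) + U.card) := by
        exact_mod_cast hcards
      rw [this]; exact hinv
    have hrange' : ∀ v ∈ V', lo + T ≤ v ∧ v < (lo + T) + r * T := by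
      intro v hv
      refine ⟨hV'mem v hv, ?_⟩
      have h1 := (hV v (Finset.mem_sdiff.1 hv).1).2
      push_cast at h1
      have h2 : a + ((r : ℤ) + 1) * T = a + T + (r : ℤ) * T := by ring
      linarith
    have hU'bounds : ∀ u ∈ U ∪ UB, 0 ≤ u ∧ u < T := by
      intro u hu
      rcases Finset.mem_union.1 hu with h | h
      · exact hU u h
      · rw [hUB, Finset.mem_image] at h
        obtain ⟨v, hv, rfl⟩ := h
        exact hgBrange v hv
    obtain ⟨L', hlen', hthr', hval', hinj'⟩ :=
      ih (lo + T) (s - lo - T) V' (U ∪ UB) hrange' hU'bounds hinv'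
    have hevalB : ∀ v, lo ≤ v → v < lo + T →
        v + base + jsum ((lo, s - lo - base) :: (lo + T - s, -T) :: L') v = gB v := by
      intro v h1 h2
      have hz : jsum L' v = 0 :=
        jsum_eq_zero L' v (fun p hp => lt_of_lt_of_le h2 (hthr' p hp))
      rw [jsum_cons, jsum_cons, hz, if_pos h1]
      by_cases hc : lo + T - s ≤ v
      · rw [if_pos hc]
        have hval : gB v = v - lo + s - T := by
          show (v - lo + s) % T = _
          rw [show v - lo + s = (v - lo + s - T) + T * 1 by ring,
            Int.add_mul_emod_self_left, Int.emod_eq_of_lt (by omega) (by omega)]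
          ring
        rw [hval]; ring
      · rw [if_neg hc]
        have hval : gB v = v - lo + s := Int.emod_eq_of_lt (by omega) (by omega)
        rw [hval]; ring
    have hevalV' : ∀ v ∈ V',
        v + base + jsum ((lo, s - lo - base) :: (lo + T - s, -T) :: L') v
          = v + (s - lo - T) + jsum L' v := by
      intro v hv
      have h1 : lo + T ≤ v := hV'mem v hv
      rw [jsum_cons, jsum_cons, if_pos (by omega), if_pos (by omega)]
      ring
    have hsplit : ∀ v ∈ V, (v ∈ B ∧ lo ≤ v ∧ v < lo + T) ∨ v ∈ V' := by
      intro v hv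
      by_cases hvB : v < lo + T
      · exact Or.inl ⟨Finset.mem_filter.2 ⟨hv, hvB⟩, V.min'_le v hv, hvB⟩
      · exact Or.inr (Finset.mem_sdiff.2 ⟨hv, fun hBm => hvB (Finset.mem_filter.1 hBm).2⟩)
    refine ⟨(lo, s - lo - base) :: (lo + T - s, -T) :: L', ?_, ?_, ?_, ?_⟩
    · simp only [List.length_cons]
      omega
    · intro p hp
      rcases List.mem_cons.1 hp with rfl | hp
      · exact halo
      rcases List.mem_cons.1 hp with rfl | hp
      · simp only
        omega
      · have := hthr' p hp
        omega
    · intro v hv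
      rcases hsplit v hv with ⟨hvB, h1, h2⟩ | hvV'
      · rw [hevalB v h1 h2]
        exact ⟨hgBrange v hvB, fun hmem => hgood v hvB _ hmem rfl⟩
      · rw [hevalV' v hvV']
        obtain ⟨hr, hnm⟩ := hval' v hvV'
        exact ⟨hr, fun hmem => hnm (Finset.mem_union_left _ hmem)⟩
    · intro v hv v' hv' he
      rw [Finset.mem_coe] at hv hv'
      simp only at he
      rcases hsplit v hv with ⟨hvB, h1, h2⟩ | hvV' <;>
        rcases hsplit v' hv' with ⟨hvB', h1', h2'⟩ | hvV''
      · rw [hevalB v h1 h2, hevalB v' h1' h2'] at he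
        exact hgBinj v hvB v' hvB' he
      · exfalso
        rw [hevalB v h1 h2, hevalV' v' hvV''] at he
        have hmem : gB v ∈ UB := Finset.mem_image_of_mem _ hvB
        rw [he] at hmem
        exact (hval' v' hvV'').2 (Finset.mem_union_right _ hmem)
      · exfalso
        rw [hevalV' v hvV', hevalB v' h1' h2'] at he
        have hmem : gB v' ∈ UB := Finset.mem_image_of_mem _ hvB'
        rw [← he] at hmem
        exact (hval' v hvV').2 (Finset.mem_union_right _ hmem)
      · rw [hevalV' v hvV', hevalV' v' hvV''] at he
        exact hinj' (Finset.mem_coe.2 hvV') (Finset.mem_coe.2 hvV'') he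

lemma top (T K : ℤ) (m : ℕ) (hT : 0 < T) (hm : 1 ≤ m) (hKmT : K ≤ (m : ℤ) * T)
    (V : Finset ℤ) (hVne : V.Nonempty) (hVr : ∀ v ∈ V, 0 ≤ v ∧ v < K)
    (hinv : ((V.card : ℤ)) ^ 2 < 4 * T) :
    ∃ (c₀ : ℤ) (L : List (ℤ × ℤ)), L.length ≤ 2 * (m - 1) ∧
      (∀ v ∈ V, 0 ≤ v + c₀ + jsum L v ∧ v + c₀ + jsum L v < T) ∧
      Set.InjOn (fun v => v + c₀ + jsum L v) (V : Set ℤ) := by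
  set lo := V.min' hVne with hlo
  have hloV : lo ∈ V := V.min'_mem hVne
  have hlo0 : 0 ≤ lo := (hVr lo hloV).1
  set B := V.filter (fun v => v < lo + T) with hB
  have hBV : B ⊆ V := Finset.filter_subset _ _
  have hBmem : ∀ v ∈ B, lo ≤ v ∧ v < lo + T := by
    intro v hv
    rw [hB, Finset.mem_filter] at hv
    exact ⟨V.min'_le v hv.1, hv.2⟩
  set V' := V \ B with hV'
  have hV'mem : ∀ v ∈ V', lo + T ≤ v := by
    intro v hv
    rw [hV', Finset.mem_sdiff, hB, Finset.mem_filter] at hv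
    have h2 := hv.2
    push_neg at h2
    exact h2 hv.1
  set U := B.image (fun v => v - lo) with hU
  have hUb : ∀ u ∈ U, 0 ≤ u ∧ u < T := by
    intro u hu
    rw [hU, Finset.mem_image] at hu
    obtain ⟨v, hv, rfl⟩ := hu
    have := hBmem v hv
    omega
  have hUcard : U.card = B.card :=
    Finset.card_image_of_injOn (fun v _ v' _ h => by omega)
  have hrange' : ∀ v ∈ V', lo + T ≤ v ∧ v < (lo + T) + ((m - 1 : ℕ) : ℤ) * T := by
    intro v hv
    refine ⟨hV'mem v hv, ?_⟩
    have h1 := (hVr v (Finset.mem_sdiff.1 hv).1).2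
    have hc : ((m - 1 : ℕ) : ℤ) = (m : ℤ) - 1 := by
      have : (1:ℤ) ≤ (m:ℤ) := by exact_mod_cast hm
      push_cast [Nat.cast_sub hm]
      ring
    rw [hc]
    have h2 : (m : ℤ) * T = T + ((m:ℤ) - 1) * T := by ring
    linarith
  have hinv' : ((V'.card : ℤ) + U.card) ^ 2 < 4 * T := by
    have hcards : V'.card + U.card = V.card := by
      have h2 : V'.card + B.card = V.card := Finset.card_sdiff_add_card_eq_card hBV
      omega
    have : ((V'.card : ℤ) + U.card) = (V.card : ℤ) := by exact_mod_cast hcards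
    rw [this]; exact hinv
  obtain ⟨L, hlen, hthr, hval, hinj⟩ :=
    core T hT (m - 1) (lo + T) (-lo) V' U hrange' hUb hinv'
  have hevalB : ∀ v, lo ≤ v → v < lo + T → v + (-lo) + jsum L v = v - lo := by
    intro v h1 h2
    have hz : jsum L v = 0 :=
      jsum_eq_zero L v (fun p hp => lt_of_lt_of_le h2 (hthr p hp))
    rw [hz]; ring
  have hsplit : ∀ v ∈ V, (v ∈ B ∧ lo ≤ v ∧ v < lo + T) ∨ v ∈ V' := by
    intro v hv
    by_cases hvB : v < lo + T
    · exact Or.inl ⟨Finset.mem_filter.2 ⟨hv, hvB⟩, V.min'_le v hv, hvB⟩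
    · exact Or.inr (Finset.mem_sdiff.2 ⟨hv, fun hBm => hvB (Finset.mem_filter.1 hBm).2⟩)
  refine ⟨-lo, L, hlen, ?_, ?_⟩
  · intro v hv
    rcases hsplit v hv with ⟨hvB, h1, h2⟩ | hvV'
    · rw [hevalB v h1 h2]
      omega
    · exact (hval v hvV').1
  · intro v hv v' hv' he
    rw [Finset.mem_coe] at hv hv'
    simp only at he
    rcases hsplit v hv with ⟨hvB, h1, h2⟩ | hvV' <;>
      rcases hsplit v' hv' with ⟨hvB', h1', h2'⟩ | hvV''
    · rw [hevalB v h1 h2, hevalB v' h1' h2'] at he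
      omega
    · exfalso
      rw [hevalB v h1 h2] at he
      have hmem : v - lo ∈ U := by
        rw [hU, Finset.mem_image]; exact ⟨v, hvB, rfl⟩
      rw [he] at hmem
      exact (hval v' hvV'').2 hmem
    · exfalso
      rw [hevalB v' h1' h2'] at he
      have hmem : v' - lo ∈ U := by
        rw [hU, Finset.mem_image]; exact ⟨v', hvB', rfl⟩
      rw [← he] at hmem
      exact (hval v hvV').2 hmem
    · exact hinj (Finset.mem_coe.2 hvV') (Finset.mem_coe.2 hvV'') he

end S12Aux

/-- Lemma 9: one hidden layer of width `d` halves the range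
of well-separated scalar values, down to `⌊N²/4 + 1⌋`. -/
theorem statement_12 (N K d : ℕ) (hN : 1 ≤ N) (hK : 1 ≤ K) (hd : 1 ≤ d)
    (X : Finset ℝ)
    (hcard : (X.image fun x => ⌊x⌋).card = N)
    (hrange : ∀ x ∈ X, 0 ≤ ⌊x⌋ ∧ ⌊x⌋ < (K : ℤ)) :
    ∃ f : (Fin 1 → ℝ) → (Fin 1 → ℝ), IsStepIdNet 1 [d] 1 f ∧
      (X.image fun x => ⌊f (fun _ => x) 0⌋).card = N ∧
      ∀ x ∈ X, 0 ≤ ⌊f (fun _ => x) 0⌋ ∧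
        ⌊f (fun _ => x) 0⌋ <
          ((max (K ⌈/⌉ ((d + 1) / 2)) (N ^ 2 / 4 + 1) : ℕ) : ℤ) := by
  obtain ⟨d', rfl⟩ : ∃ d', d = d' + 1 := ⟨d - 1, by omega⟩
  set m : ℕ := (d' + 1 + 1) / 2 with hm
  set Tn : ℕ := max (K ⌈/⌉ m) (N ^ 2 / 4 + 1) with hTn
  set V : Finset ℤ := X.image (fun x => ⌊x⌋) with hV
  have hVcard : V.card = N := hcard
  have hVne : V.Nonempty := Finset.card_pos.1 (by omega)
  have hm1 : 1 ≤ m := by omega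
  have hTn1 : 1 ≤ Tn := le_trans (by omega) (le_max_right _ _)
  have hT0 : 0 < (Tn : ℤ) := by exact_mod_cast hTn1
  have hKT : (K : ℤ) ≤ (m : ℤ) * (Tn : ℤ) := by
    have h1 : K ≤ m • (K ⌈/⌉ m) := le_smul_ceilDiv (show 0 < m by omega)
    rw [smul_eq_mul] at h1
    have h2 : m * (K ⌈/⌉ m) ≤ m * Tn :=
      Nat.mul_le_mul_left m (le_max_left _ _)
    exact_mod_cast le_trans h1 h2
  have hinvN : N ^ 2 < 4 * Tn := by
    have h4 := Nat.div_add_mod (N ^ 2) 4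
    have h5 : N ^ 2 % 4 < 4 := Nat.mod_lt _ (by omega)
    have h6 : N ^ 2 / 4 + 1 ≤ Tn := le_max_right _ _
    omega
  have hinv : ((V.card : ℤ)) ^ 2 < 4 * (Tn : ℤ) := by
    rw [hVcard]
    exact_mod_cast hinvN
  have hVr : ∀ v ∈ V, 0 ≤ v ∧ v < (K : ℤ) := by
    intro v hv
    rw [hV, Finset.mem_image] at hv
    obtain ⟨x, hx, rfl⟩ := hv
    exact hrange x hx
  obtain ⟨c₀, L, hlen, hval, hinj⟩ :=
    S12Aux.top (Tn : ℤ) (K : ℤ) m hT0 hm1 hKT V hVne hVr hinv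
  have hlend : L.length ≤ d' := by omega
  set pad : ℕ → ℤ × ℤ := fun j => L.getD j (0, 0) with hpad
  set θr : Fin (d' + 1) → ℝ :=
    fun i => if (i : ℕ) = 0 then 0 else ((pad ((i : ℕ) - 1)).1 : ℝ) with hθr
  set coef : Fin (d' + 1) → ℝ :=
    fun i => if (i : ℕ) = 0 then 1 else ((pad ((i : ℕ) - 1)).2 : ℝ) with hcoef
  set t : (Fin 1 → ℝ) → (Fin (d' + 1) → ℝ) := fun x i => x 0 - θr i with ht
  set φ : Fin (d' + 1) → Bool := fun i => decide ((i : ℕ) ≠ 0) with hφ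
  set gout : (Fin (d' + 1) → ℝ) → (Fin 1 → ℝ) :=
    fun y _ => (∑ i, coef i * y i) + (c₀ : ℝ) with hgout
  have hstep : ∀ (x : ℝ) (n : ℤ), stepFun (x - (n : ℝ)) = if n ≤ ⌊x⌋ then (1 : ℝ) else 0 := by
    intro x n
    by_cases h : n ≤ ⌊x⌋
    · rw [if_pos h, stepFun, if_pos (by rw [sub_nonneg]; exact Int.le_floor.1 h)]
    · rw [if_neg h, stepFun, if_neg (by rw [not_le, sub_neg]; exact lt_of_not_ge (fun hc => h (Int.le_floor.2 hc)))]
  have heval : ∀ x : ℝ,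
      gout (fun i => if φ i then stepFun (t (fun _ => x) i) else t (fun _ => x) i) 0
        = x + ((c₀ + S12Aux.jsum L ⌊x⌋ : ℤ) : ℝ) := by
    intro x
    show (∑ i, coef i * (if φ i then stepFun ((fun _ : Fin 1 => x) 0 - θr i)
        else ((fun _ : Fin 1 => x) 0 - θr i))) + (c₀ : ℝ) = _
    rw [Fin.sum_univ_succ]
    have h0 : coef 0 * (if φ 0 then stepFun ((fun _ : Fin 1 => x) 0 - θr 0)
        else ((fun _ : Fin 1 => x) 0 - θr 0)) = x := by
      simp [hcoef, hφ, hθr]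
    rw [h0]
    have hsucc : ∀ i : Fin d', coef i.succ * (if φ i.succ then
        stepFun ((fun _ : Fin 1 => x) 0 - θr i.succ) else ((fun _ : Fin 1 => x) 0 - θr i.succ))
        = ((if (pad (i : ℕ)).1 ≤ ⌊x⌋ then (pad (i : ℕ)).2 else 0 : ℤ) : ℝ) := by
      intro i
      have hv : ((i.succ : ℕ)) = (i : ℕ) + 1 := rfl
      have hc : coef i.succ = ((pad (i : ℕ)).2 : ℝ) := by
        rw [hcoef]; simp [hv]
      have hth : θr i.succ = ((pad (i : ℕ)).1 : ℝ) := by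
        rw [hθr]; simp [hv]
      have hphi : φ i.succ = true := by
        rw [hφ]; simp [hv]
      rw [hc, hth, hphi, if_pos rfl]
      show ((pad (i : ℕ)).2 : ℝ) * stepFun (x - _) = _
      rw [hstep x (pad (i : ℕ)).1]
      split_ifs <;> simp
    rw [Finset.sum_congr rfl (fun i _ => hsucc i)]
    rw [← Int.cast_sum]
    have hsum : ∑ i : Fin d', (if (pad (i : ℕ)).1 ≤ ⌊x⌋ then (pad (i : ℕ)).2 else 0)
        = S12Aux.jsum L ⌊x⌋ := by
      rw [Fin.sum_univ_eq_sum_range (fun j => if (pad j).1 ≤ ⌊x⌋ then (pad j).2 else 0) (d')]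
      exact S12Aux.sum_getD ⌊x⌋ L d' hlend
    rw [hsum]
    push_cast
    ring
  have hfloor : ∀ x : ℝ,
      ⌊gout (fun i => if φ i then stepFun (t (fun _ => x) i) else t (fun _ => x) i) 0⌋
        = ⌊x⌋ + c₀ + S12Aux.jsum L ⌊x⌋ := by
    intro x
    rw [heval x, Int.floor_add_intCast]
    ring
  refine ⟨fun x => gout (fun i => if φ i then stepFun (t x i) else t x i), ?_, ?_, ?_⟩
  · refine ⟨t, φ, gout, ?_, ?_, fun x => rfl⟩
    · refine ⟨fun _ _ => 1, fun i => -θr i, fun x => ?_⟩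
      funext i
      simp [ht, Matrix.mulVec, dotProduct, Fin.sum_univ_one, sub_eq_add_neg]
    · show IsAffineVecMap gout
      refine ⟨fun _ i => coef i, fun _ => (c₀ : ℝ), fun y => ?_⟩
      funext i
      simp [hgout, Matrix.mulVec, dotProduct]
  · have himg : (X.image fun x => ⌊(fun x => gout (fun i => if φ i then stepFun (t x i)
        else t x i)) (fun _ => x) 0⌋)
        = V.image (fun v => v + c₀ + S12Aux.jsum L v) := by
      rw [hV, Finset.image_image]
      apply Finset.image_congr
      intro x _
      exact hfloor x
    rw [himg, Finset.card_image_of_injOn hinj, hVcard]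
  · intro x hx
    have hvV : ⌊x⌋ ∈ V := by
      rw [hV]; exact Finset.mem_image_of_mem _ hx
    have := hval ⌊x⌋ hvV
    rw [hfloor x]
    exact this
end
end

section
/- Let A, B, K, L, d_1, …, d_L ∈ ℕ satisfy A, B, K ≥ 1, A·B ≥ K, d_ℓ ≥ 2 for all ℓ, and Σ_{ℓ=1}^{L}(d_ℓ − 2) ≥ A. Then for any finite set X ⊂ [0, K) and any real numbers w_0, w_1, …, w_{A−1} ∈ ℝ, there exists a Step+Id network f with L hidden layers of widths d_1, …, d_L, input dimension 1 and output dimension 2, such that f(x) = (w_{⌊x/B⌋}, x − B·⌊x/B⌋) for all x ∈ X. -/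
open Real Filter

noncomputable section

/-!
Write `q = ⌊x / B⌋₊`. Starting from `(w 0, x)`, each hidden layer of width `d` compares the current
remainder `x - B p` with `B, 2B, …, (d - 2)B` using `d - 2` step neurons, while two identity neurons
carry the pair `(w p, x - B p)`. The number of firing neurons is `min (p + d - 2) q - p`, so the next
affine map can advance `p` to `min (p + d - 2) q`, updating `w p` by the telescoping sum of the
increments `w (i + 1) - w i`. After all layers `p = min (∑ (d_ℓ - 2)) q = q`, since `x < K ≤ AB`
gives `q < A`.
-/

namespace IsAffineVecMap

theorem id {n : ℕ} : IsAffineVecMap (fun x : Fin n → ℝ => x) :=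
  ⟨1, 0, fun x => by simp⟩

theorem comp_s16 {a b c : ℕ} {g : (Fin b → ℝ) → (Fin c → ℝ)} {h : (Fin a → ℝ) → (Fin b → ℝ)}
    (hg : IsAffineVecMap g) (hh : IsAffineVecMap h) : IsAffineVecMap (fun x => g (h x)) := by
  obtain ⟨W₁, b₁, h₁⟩ := hg
  obtain ⟨W₂, b₂, h₂⟩ := hh
  exact ⟨W₁ * W₂, W₁.mulVec b₂ + b₁, fun x => by
    simp [h₁, h₂, Matrix.mulVec_add, Matrix.mulVec_mulVec, add_assoc]⟩

end IsAffineVecMap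

theorem IsStepIdNet.comp_affine {din dout e : ℕ} {ws : List ℕ}
    {g : (Fin din → ℝ) → (Fin dout → ℝ)} {h : (Fin e → ℝ) → (Fin din → ℝ)}
    (hg : IsStepIdNet din ws dout g) (hh : IsAffineVecMap h) :
    IsStepIdNet e ws dout (fun x => g (h x)) := by
  cases ws with
  | nil => exact IsAffineVecMap.comp_s16 hg hh
  | cons d ds =>
    obtain ⟨t, φ, g', ht, hg', heq⟩ := hg
    exact ⟨fun x => t (h x), φ, g', ht.comp_s16 hh, hg', fun x => heq (h x)⟩

theorem Finset.sum_range_ite_sub_min {M : Type*} [AddCommGroup M] (f : ℕ → M) (m n k : ℕ) :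
    ∑ j ∈ range k, (if m + j + 1 ≤ n then f (m + j + 1) - f (m + j) else 0) =
      f (min (m + k) n) - f (min m n) := by
  have hterm : ∀ j, (if m + j + 1 ≤ n then f (m + j + 1) - f (m + j) else 0) =
      f (min (m + (j + 1)) n) - f (min (m + j) n) := by
    intro j
    split_ifs with h
    · rw [min_eq_left (by omega), min_eq_left (by omega), ← add_assoc]
    · rw [min_eq_right (by omega), min_eq_right (by omega), sub_self]
  simp only [hterm]
  exact sum_range_sub (fun j => f (min (m + j) n)) k

theorem natCast_mul_le_iff_le_floor_div {B x : ℝ} (hB : 0 < B) (hx : 0 ≤ x) (a : ℕ) :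
    a * B ≤ x ↔ a ≤ ⌊x / B⌋₊ := by
  rw [Nat.le_floor_iff (div_nonneg hx hB.le), le_div_iff₀ hB]

theorem stepFun_sub_floorDivState {B : ℝ} (hB : 0 < B) {x : ℝ} (hx : 0 ≤ x) (m j : ℕ) :
    stepFun (x - B * min m ⌊x / B⌋₊ - (j + 1) * B) = if m + j + 1 ≤ ⌊x / B⌋₊ then 1 else 0 := by
  have hnonneg : 0 ≤ x - B * min m ⌊x / B⌋₊ - (j + 1) * B ↔ m + j + 1 ≤ ⌊x / B⌋₊ := by
    rw [← (by omega : min m ⌊x / B⌋₊ + j + 1 ≤ ⌊x / B⌋₊ ↔ m + j + 1 ≤ ⌊x / B⌋₊),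
      ← natCast_mul_le_iff_le_floor_div hB hx]
    push_cast
    constructor <;> intro <;> linarith
  simp only [stepFun, hnonneg]

section FloorDiv

variable (B : ℝ) (w : ℕ → ℝ)

def floorDivState (m : ℕ) (x : ℝ) : Fin 2 → ℝ :=
  ![w (min m ⌊x / B⌋₊), x - B * min m ⌊x / B⌋₊]

def countLayerIn (k : ℕ) (y : Fin 2 → ℝ) : Fin (k + 2) → ℝ :=
  Fin.cons (y 0) (Fin.cons (y 1) fun j : Fin k => y 1 - (j + 1) * B)

def countLayerAct (k : ℕ) : Fin (k + 2) → Bool :=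
  Fin.cons false (Fin.cons false fun _ => true)

def countLayerOut (m k : ℕ) (z : Fin (k + 2) → ℝ) : Fin 2 → ℝ :=
  ![z 0 + ∑ j : Fin k, (w (m + j + 1) - w (m + j)) * z j.succ.succ,
    z 1 - B * ∑ j : Fin k, z j.succ.succ]

theorem isAffineVecMap_countLayerIn (k : ℕ) : IsAffineVecMap (countLayerIn B k) := by
  refine ⟨Fin.cons ![1, 0] (Fin.cons ![0, 1] fun _ => ![0, 1]),
    Fin.cons 0 (Fin.cons 0 fun j => -((j + 1) * B)), fun y => ?_⟩
  funext i
  refine Fin.cases ?_ (Fin.cases ?_ fun j => ?_) i <;>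
    simp [countLayerIn, Matrix.mulVec, dotProduct, Fin.sum_univ_two, sub_eq_add_neg]

theorem isAffineVecMap_countLayerOut (m k : ℕ) : IsAffineVecMap (countLayerOut B w m k) := by
  refine ⟨![Fin.cons 1 (Fin.cons 0 fun j => w (m + j + 1) - w (m + j)),
    Fin.cons 0 (Fin.cons 1 fun _ => -B)], 0, fun z => ?_⟩
  funext l
  fin_cases l <;>
    simp [countLayerOut, Matrix.mulVec, dotProduct, Fin.sum_univ_succ, Finset.mul_sum,
      sub_eq_add_neg]

theorem countLayerOut_countLayerIn_floorDivState (hB : 0 < B) (m k : ℕ) {x : ℝ} (hx : 0 ≤ x) :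
    countLayerOut B w m k (fun i => if countLayerAct k i
        then stepFun (countLayerIn B k (floorDivState B w m x) i)
        else countLayerIn B k (floorDivState B w m x) i) =
      floorDivState B w (m + k) x := by
  set n := ⌊x / B⌋₊
  have hcount : ∑ j : Fin k, (if m + (j : ℕ) + 1 ≤ n then (1 : ℝ) else 0) =
      (min (m + k) n : ℕ) - (min m n : ℕ) := by
    rw [Fin.sum_univ_eq_sum_range (fun j => if m + j + 1 ≤ n then (1 : ℝ) else 0),
      ← Finset.sum_range_ite_sub_min (fun j => (j : ℝ))]
    push_cast
    simp
  have htelescope : ∑ j : Fin k, (if m + (j : ℕ) + 1 ≤ n then w (m + j + 1) - w (m + j) else 0) =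
      w (min (m + k) n) - w (min m n) := by
    rw [Fin.sum_univ_eq_sum_range (fun j => if m + j + 1 ≤ n then w (m + j + 1) - w (m + j) else 0),
      Finset.sum_range_ite_sub_min]
  have hact : (fun i => if countLayerAct k i
        then stepFun (countLayerIn B k (floorDivState B w m x) i)
        else countLayerIn B k (floorDivState B w m x) i) =
      Fin.cons (w (min m n)) (Fin.cons (x - B * (min m n : ℕ))
        fun j : Fin k => if m + (j : ℕ) + 1 ≤ n then 1 else 0) := by
    funext i
    refine Fin.cases rfl (Fin.cases rfl fun j => ?_) i
    simp only [countLayerAct, countLayerIn, floorDivState, Fin.cons_succ, if_true]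
    exact stepFun_sub_floorDivState hB hx m j
  rw [hact]
  funext l
  fin_cases l
  · simp only [countLayerOut, floorDivState, Fin.cons_zero, Fin.cons_succ, mul_ite, mul_one,
      mul_zero, htelescope]
    exact add_sub_cancel _ _
  · simp only [Fin.mk_one, countLayerOut, floorDivState, Matrix.cons_val_one, Matrix.cons_val_zero,
      Fin.cons_zero, Fin.cons_one, Fin.cons_succ, hcount]
    ring

end FloorDiv

theorem exists_isStepIdNet_floorDivState {B : ℝ} (hB : 0 < B) (w : ℕ → ℝ) (ws : List ℕ)
    (hws : ∀ d ∈ ws, 2 ≤ d) (m : ℕ) :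
    ∃ f : (Fin 2 → ℝ) → (Fin 2 → ℝ), IsStepIdNet 2 ws 2 f ∧ ∀ x, 0 ≤ x →
      f (floorDivState B w m x) = floorDivState B w (m + (ws.map (· - 2)).sum) x := by
  induction ws generalizing m with
  | nil => exact ⟨fun y => y, IsAffineVecMap.id, fun x _ => rfl⟩
  | cons d ds ih =>
    obtain ⟨k, rfl⟩ : ∃ k, d = k + 2 := ⟨d - 2, by have := hws d (by simp); omega⟩
    obtain ⟨g, hg, hgx⟩ := ih (fun d hd => hws d (by simp [hd])) (m + k)
    refine ⟨fun y => g (countLayerOut B w m k fun i => if countLayerAct k i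
        then stepFun (countLayerIn B k y i) else countLayerIn B k y i),
      ⟨countLayerIn B k, countLayerAct k, fun z => g (countLayerOut B w m k z),
        isAffineVecMap_countLayerIn B k, hg.comp_affine (isAffineVecMap_countLayerOut B w m k),
        fun _ => rfl⟩, fun x hx => ?_⟩
    simp only [countLayerOut_countLayerIn_floorDivState B w hB m k hx, hgx x hx, List.map_cons,
      List.sum_cons, Nat.add_sub_cancel, add_assoc]

theorem statement_16_general (A B K : ℕ) (hB : 1 ≤ B)
    (hAB : K ≤ A * B) (ws : List ℕ) (hws : ∀ w ∈ ws, 2 ≤ w)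
    (hsum : A ≤ (ws.map (· - 2)).sum)
    (X : Finset ℝ) (hX : ∀ x ∈ X, 0 ≤ x ∧ x < (K : ℝ)) (w : ℕ → ℝ) :
    ∃ f : (Fin 1 → ℝ) → (Fin 2 → ℝ), IsStepIdNet 1 ws 2 f ∧
      ∀ x ∈ X, f (fun _ => x) 0 = w (⌊x / (B : ℝ)⌋.toNat) ∧
        f (fun _ => x) 1 = x - (B : ℝ) * (⌊x / (B : ℝ)⌋ : ℝ) := by
  have hBpos : (0 : ℝ) < B := by exact_mod_cast hB
  obtain ⟨g, hg, hgx⟩ := exists_isStepIdNet_floorDivState hBpos w ws hws 0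
  have hinput : IsAffineVecMap fun y : Fin 1 → ℝ => ![w 0, y 0] :=
    ⟨![![0], ![1]], ![w 0, 0], fun y => by
      ext l; fin_cases l <;> simp [Matrix.mulVec, dotProduct]⟩
  refine ⟨fun y => g ![w 0, y 0], hg.comp_affine hinput, fun x hx => ?_⟩
  obtain ⟨hx0, hxK⟩ := hX x hx
  have hxB : 0 ≤ x / B := div_nonneg hx0 hBpos.le
  have hfloor : ⌊x / B⌋₊ ≤ (ws.map (· - 2)).sum := by
    have : ⌊x / B⌋₊ < A := by
      rw [Nat.floor_lt hxB, div_lt_iff₀ hBpos]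
      exact hxK.trans_le (by exact_mod_cast hAB)
    omega
  have hstart : ![w 0, x] = floorDivState B w 0 x := by simp [floorDivState]
  show g ![w 0, x] 0 = _ ∧ g ![w 0, x] 1 = _
  rw [hstart, hgx x hx0, Int.floor_toNat, ← Int.natCast_floor_eq_floor hxB]
  simp [floorDivState, min_eq_right hfloor]

/-- Lemma 11: extracting the parameter `w_{⌊x/B⌋}` and the
remainder `x mod B` with a Step+Id network. -/
theorem statement_16 (A B K : ℕ) (hA : 1 ≤ A) (hB : 1 ≤ B) (hK : 1 ≤ K)
    (hAB : K ≤ A * B) (ws : List ℕ) (hws : ∀ w ∈ ws, 2 ≤ w)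
    (hsum : A ≤ (ws.map (· - 2)).sum)
    (X : Finset ℝ) (hX : ∀ x ∈ X, 0 ≤ x ∧ x < (K : ℝ)) (w : ℕ → ℝ) :
    ∃ f : (Fin 1 → ℝ) → (Fin 2 → ℝ), IsStepIdNet 1 ws 2 f ∧
      ∀ x ∈ X, f (fun _ => x) 0 = w (⌊x / (B : ℝ)⌋.toNat) ∧
        f (fun _ => x) 1 = x - (B : ℝ) * (⌊x / (B : ℝ)⌋ : ℝ) :=
  statement_16_general A B K hB hAB ws hws hsum X hX w
end
end

section
/- For any D, B, R ∈ ℕ with D, B, R ≥ 1 and any finite set X ⊂ [0, B), there exists a Step+Id network f with 2⌈BD/R⌉ hidden layers, input dimension 2, output dimension 1, and at most ((2R + 5)·2^R + 2R² + 8R + 7)·⌈BD/R⌉ − R·2^R − R² + 3 parameters, satisfying the following property: for every binary sequence u_1, …, u_{BD} ∈ {0, 1}, setting w = Σ_{i=1}^{BD} u_i·2^{−i}, one has f(x, w) = Σ_{i=1}^{D} u_{⌊x⌋·D + i}·2^{D−i} for all x ∈ X. -/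
open Real Filter

noncomputable section

namespace St17

/-! ### Affine function API -/

def AffFun {m : ℕ} (g : (Fin m → ℝ) → ℝ) : Prop :=
  ∃ (c : Fin m → ℝ) (d : ℝ), ∀ x, g x = (∑ j, c j * x j) + d

lemma AffFun.const {m : ℕ} (r : ℝ) : AffFun (fun _ : Fin m → ℝ => r) :=
  ⟨0, r, by simp⟩

lemma AffFun.proj {m : ℕ} (j : Fin m) : AffFun (fun x : Fin m → ℝ => x j) := by
  refine ⟨Pi.single j 1, 0, fun x => ?_⟩
  simp [Pi.single_apply, ite_mul, Finset.sum_ite_eq']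

lemma AffFun.add {m : ℕ} {f g : (Fin m → ℝ) → ℝ} (hf : AffFun f) (hg : AffFun g) :
    AffFun (fun x => f x + g x) := by
  obtain ⟨c, d, hc⟩ := hf; obtain ⟨c', d', hc'⟩ := hg
  refine ⟨c + c', d + d', fun x => ?_⟩
  simp only [hc, hc', Pi.add_apply, add_mul, Finset.sum_add_distrib]; ring

lemma AffFun.cmul {m : ℕ} {f : (Fin m → ℝ) → ℝ} (r : ℝ) (hf : AffFun f) :
    AffFun (fun x => r * f x) := by
  obtain ⟨c, d, hc⟩ := hf
  refine ⟨r • c, r * d, fun x => ?_⟩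
  simp only [hc, Pi.smul_apply, smul_eq_mul, mul_add, Finset.mul_sum]; ring_nf

lemma AffFun.neg {m : ℕ} {f : (Fin m → ℝ) → ℝ} (hf : AffFun f) :
    AffFun (fun x => -f x) := by
  have := hf.cmul (-1); simpa using this

lemma AffFun.sub {m : ℕ} {f g : (Fin m → ℝ) → ℝ} (hf : AffFun f) (hg : AffFun g) :
    AffFun (fun x => f x - g x) := by
  have := hf.add hg.neg; simpa [sub_eq_add_neg] using this

lemma AffFun.sum {m : ℕ} {ι : Type*} {s : Finset ι} {g : ι → (Fin m → ℝ) → ℝ}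
    (h : ∀ i ∈ s, AffFun (g i)) : AffFun (fun x => ∑ i ∈ s, g i x) := by
  classical
  induction s using Finset.cons_induction with
  | empty => simpa using AffFun.const 0
  | cons a s ha ih =>
      simp only [Finset.sum_cons]
      exact (h a (Finset.mem_cons_self a s)).add
        (ih fun i hi => h i (Finset.mem_cons_of_mem hi))

lemma isAffineVecMap_of_rows {m n : ℕ} {f : (Fin m → ℝ) → (Fin n → ℝ)}
    (h : ∀ i : Fin n, AffFun (fun x => f x i)) : IsAffineVecMap f := by
  choose c d hc using h
  refine ⟨Matrix.of c, d, fun x => funext fun i => ?_⟩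
  simpa [Matrix.mulVec, dotProduct] using hc i x

lemma AffFun.of_vecMap {m n : ℕ} {f : (Fin m → ℝ) → (Fin n → ℝ)}
    (h : IsAffineVecMap f) (i : Fin n) : AffFun (fun x => f x i) := by
  obtain ⟨W, b, hW⟩ := h
  refine ⟨fun j => W i j, b i, fun x => ?_⟩
  show f x i = _
  rw [hW]; simp [Matrix.mulVec, dotProduct]


lemma AffFun.congr {m : ℕ} {f g : (Fin m → ℝ) → ℝ} (hf : AffFun f) (h : ∀ x, f x = g x) :
    AffFun g := by
  have : f = g := funext h
  rwa [← this]

lemma AffFun.comp_affine {d d' : ℕ} {g : (Fin d → ℝ) → ℝ} (hg : AffFun g)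
    {A : (Fin d' → ℝ) → (Fin d → ℝ)} (hA : IsAffineVecMap A) :
    AffFun (fun x => g (A x)) := by
  obtain ⟨c, e, hc⟩ := hg
  refine AffFun.congr (f := fun x => (∑ j, c j * A x j) + e) ?_ (fun x => (hc (A x)).symm)
  exact (AffFun.sum (fun j _ => (AffFun.of_vecMap hA j).cmul (c j))).add (AffFun.const e)

/-- Precomposition of a Step+Id net with an affine map. -/
lemma stepIdNet_comp_affine :
    ∀ (ws : List ℕ) (d d' dout : ℕ) (g : (Fin d → ℝ) → (Fin dout → ℝ))
      (A : (Fin d' → ℝ) → (Fin d → ℝ)),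
      IsStepIdNet d ws dout g → IsAffineVecMap A →
      IsStepIdNet d' ws dout (fun x => g (A x))
  | [], d, d', dout, g, A, hg, hA =>
      isAffineVecMap_of_rows fun i => (AffFun.of_vecMap hg i).comp_affine hA
  | (w :: ws), d, d', dout, g, A, hg, hA => by
      obtain ⟨t, φ, g', ht, hg', hfx⟩ := hg
      exact ⟨fun x => t (A x), φ, g',
        isAffineVecMap_of_rows fun i => (AffFun.of_vecMap ht i).comp_affine hA,
        hg', fun x => hfx (A x)⟩

/-! ### The network -/

/-- window index of bit position `i` (1-indexed): `j` with `j*D < i ≤ j*D + D`. -/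
def win (D i : ℕ) : ℕ := (i - 1) / D

def Wd (R : ℕ) : ℕ := 2 ^ R + R + 1
def Nd (R : ℕ) : ℕ := R + 2

/-- bit `s` (1-indexed from the most significant of `R` bits) of `t`. -/
def bitc (R s t : ℕ) : ℕ := t / 2 ^ (R - s) % 2

def eps (D B R : ℕ) : ℝ := (2 : ℝ) ^ (-(B * D + D + R : ℤ))

lemma two_le_Wd (R : ℕ) : 2 ≤ Wd R := by
  have := Nat.one_le_two_pow (n := R); unfold Wd; omega

/-- affine map into the wide layer. -/
def tA (D R P : ℕ) (v : Fin 2 → ℝ) (i : Fin (Wd R)) : ℝ :=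
  if i.val = 0 then v 0
  else if i.val = 1 then v 1
  else if i.val ≤ R + 1 then v 0 - ((win D (P + (i.val - 1)) + 1 : ℕ) : ℝ)
  else (2 : ℝ) ^ (P + R) * v 1 - ((i.val - (R + 1) : ℕ) : ℝ)

/-- wide layer output. -/
def actA (D R P : ℕ) (v : Fin 2 → ℝ) (i : Fin (Wd R)) : ℝ :=
  if 2 ≤ i.val then stepFun (tA D R P v i) else tA D R P v i

def sig (R : ℕ) (a : Fin (Wd R) → ℝ) (s : ℕ) : ℝ :=
  if h : 1 + s < Wd R then a ⟨1 + s, h⟩ else 0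

def hco (R : ℕ) (a : Fin (Wd R) → ℝ) (t : ℕ) : ℝ :=
  if h : R + 1 + t < Wd R then a ⟨R + 1 + t, h⟩ else 0

def vsum (R : ℕ) (a : Fin (Wd R) → ℝ) : ℝ := ∑ t ∈ Finset.Ioc 0 (2 ^ R - 1), hco R a t

def bsum (R : ℕ) (a : Fin (Wd R) → ℝ) (s : ℕ) : ℝ :=
  ∑ t ∈ Finset.Ioc 0 (2 ^ R - 1), ((bitc R s t : ℝ) - (bitc R s (t - 1) : ℝ)) * hco R a t

/-- affine map into the narrow layer. -/
def tN (D B R P : ℕ) (a : Fin (Wd R) → ℝ) (i : Fin (Nd R)) : ℝ :=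
  if i.val = 0 then a ⟨0, by have := two_le_Wd R; omega⟩
  else if i.val = 1 then
    a ⟨1, by have := two_le_Wd R; omega⟩ - (2 : ℝ) ^ (-(P + R : ℤ)) * vsum R a
  else (a ⟨0, by have := two_le_Wd R; omega⟩ - (win D (P + (i.val - 1)) : ℝ)) +
    (B : ℝ) * (bsum R a (i.val - 1) - sig R a (i.val - 1) - 1)

/-- narrow layer output. -/
def actN (D B R P : ℕ) (a : Fin (Wd R) → ℝ) (i : Fin (Nd R)) : ℝ :=
  if 2 ≤ i.val then stepFun (tN D B R P a i) else tN D B R P a i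

def gco (R : ℕ) (nout : Fin (Nd R) → ℝ) (s : ℕ) : ℝ :=
  if h : 1 + s < Nd R then nout ⟨1 + s, h⟩ else 0

/-- affine map out of the narrow layer (to the next pair of layers). -/
def tB (D B R P : ℕ) (nout : Fin (Nd R) → ℝ) (i : Fin 2) : ℝ :=
  if i.val = 0 then nout ⟨0, by unfold Nd; omega⟩
  else nout ⟨1, by unfold Nd; omega⟩ +
    eps D B R * ∑ s ∈ Finset.Ioc 0 R,
      (2 : ℝ) ^ ((win D (P + s) + 1) * D - (P + s)) * gco R nout s

def blockNet (D B R : ℕ) : ℕ → ℕ → (Fin 2 → ℝ) → (Fin 1 → ℝ)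
  | 0, _, v => fun _ => (eps D B R)⁻¹ * v 1
  | (m + 1), P, v => blockNet D B R m (P + R) (tB D B R P (actN D B R P (actA D R P v)))

def wsL (R : ℕ) : ℕ → List ℕ
  | 0 => []
  | (m + 1) => Wd R :: Nd R :: wsL R m

lemma wsL_length (R m : ℕ) : (wsL R m).length = 2 * m := by
  induction m with
  | zero => rfl
  | succ m ih => simp [wsL, ih]; omega

/-! ### The network is a Step+Id net -/

lemma tA_affine (D R P : ℕ) : IsAffineVecMap (tA D R P) := by
  refine isAffineVecMap_of_rows fun i => ?_
  unfold tA
  split_ifs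
  · exact AffFun.proj 0
  · exact AffFun.proj 1
  · exact (AffFun.proj 0).sub (AffFun.const _)
  · exact ((AffFun.proj 1).cmul _).sub (AffFun.const _)

lemma hco_affine (R : ℕ) (t : ℕ) : AffFun (fun a => hco R a t) := by
  unfold hco; split_ifs
  · exact AffFun.proj _
  · exact AffFun.const 0

lemma sig_affine (R : ℕ) (s : ℕ) : AffFun (fun a => sig R a s) := by
  unfold sig; split_ifs
  · exact AffFun.proj _
  · exact AffFun.const 0

lemma vsum_affine (R : ℕ) : AffFun (vsum R) :=
  AffFun.sum fun t _ => hco_affine R t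

lemma bsum_affine (R s : ℕ) : AffFun (fun a => bsum R a s) :=
  AffFun.sum fun t _ => (hco_affine R t).cmul _

lemma tN_affine (D B R P : ℕ) : IsAffineVecMap (tN D B R P) := by
  refine isAffineVecMap_of_rows fun i => ?_
  unfold tN
  split_ifs
  · exact AffFun.proj _
  · exact (AffFun.proj _).sub ((vsum_affine R).cmul _)
  · exact ((AffFun.proj _).sub (AffFun.const _)).add
      ((((bsum_affine R _).sub (sig_affine R _)).sub (AffFun.const 1)).cmul _)

lemma gco_affine (R s : ℕ) : AffFun (fun a => gco R a s) := by
  unfold gco; split_ifs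
  · exact AffFun.proj _
  · exact AffFun.const 0

lemma tB_affine (D B R P : ℕ) : IsAffineVecMap (tB D B R P) := by
  refine isAffineVecMap_of_rows fun i => ?_
  unfold tB
  split_ifs
  · exact AffFun.proj _
  · exact (AffFun.proj _).add
      ((AffFun.sum fun s _ => (gco_affine R s).cmul _).cmul _)

lemma blockNet_isNet (D B R : ℕ) : ∀ m P, IsStepIdNet 2 (wsL R m) 1 (blockNet D B R m P)
  | 0, P => isAffineVecMap_of_rows fun _ => (AffFun.proj 1).cmul _
  | (m + 1), P => by
      refine ⟨tA D R P, fun i => decide (2 ≤ i.val),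
        fun a => blockNet D B R m (P + R) (tB D B R P (actN D B R P a)),
        tA_affine D R P, ?_, fun v => ?_⟩
      · refine ⟨tN D B R P, fun i => decide (2 ≤ i.val),
          fun b => blockNet D B R m (P + R) (tB D B R P b),
          tN_affine D B R P, ?_, fun a => ?_⟩
        · exact stepIdNet_comp_affine _ _ _ _ _ _
            (blockNet_isNet D B R m (P + R)) (tB_affine D B R P)
        · have : (fun i => if (fun i : Fin (Nd R) => decide (2 ≤ i.val)) i = true
              then stepFun (tN D B R P a i) else tN D B R P a i) = actN D B R P a := by
            funext i; simp [actN]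
          rw [this]
      · have : (fun i => if (fun i : Fin (Wd R) => decide (2 ≤ i.val)) i = true
            then stepFun (tA D R P v i) else tA D R P v i) = actA D R P v := by
          funext i; simp [actA]
        rw [this]
        rfl

/-! ### Parameter count -/

lemma paramCount_tail (R : ℕ) : ∀ m, paramCount (Nd R) (wsL R m) 1 =
    m * (Wd R * (Nd R + 1) + Nd R * (Wd R + 1)) + (Nd R + 1)
  | 0 => by simp [wsL, paramCount]
  | (m + 1) => by
      have ih := paramCount_tail R m
      simp only [wsL, paramCount, ih]; ring

lemma paramCount_wsL (R m : ℕ) :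
    paramCount 2 (wsL R (m + 1)) 1 + R * 2 ^ R + R ^ 2 =
      ((2 * R + 5) * 2 ^ R + 2 * R ^ 2 + 8 * R + 7) * (m + 1) + 3 := by
  simp only [wsL, paramCount, paramCount_tail]
  unfold Wd Nd
  ring

/-! ### Arithmetic helpers -/

lemma sum_range_two_pow (e : ℕ) : ∑ i ∈ Finset.range e, 2 ^ i = 2 ^ e - 1 := by
  induction e with
  | zero => simp
  | succ e ih =>
      rw [Finset.sum_range_succ, ih, pow_succ]
      have := Nat.one_le_two_pow (n := e); omega

lemma geom_nat (L : ℕ) : ∑ s ∈ Finset.Ioc 0 L, 2 ^ (L - s) = 2 ^ L - 1 := by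
  induction L with
  | zero => simp
  | succ L ih =>
      rw [Finset.sum_Ioc_succ_top (Nat.zero_le _)]
      have h1 : ∑ s ∈ Finset.Ioc 0 L, 2 ^ (L + 1 - s) = ∑ s ∈ Finset.Ioc 0 L, 2 * 2 ^ (L - s) := by
        refine Finset.sum_congr rfl fun s hs => ?_
        have := (Finset.mem_Ioc.mp hs).2
        rw [show L + 1 - s = (L - s) + 1 by omega, pow_succ]; ring
      have h2 : L + 1 - (L + 1) = 0 := by omega
      rw [h1, ← Finset.mul_sum, ih, h2, pow_zero, pow_succ]
      have := Nat.one_le_two_pow (n := L); omega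

lemma geom_zpow (a : ℕ) : ∀ E, a ≤ E →
    ∑ i ∈ Finset.Ioc a E, (2 : ℝ) ^ (-(i : ℤ)) = (2 : ℝ) ^ (-(a : ℤ)) - (2 : ℝ) ^ (-(E : ℤ)) := by
  intro E
  induction E with
  | zero => intro h; have : a = 0 := by omega
            subst this; simp
  | succ E ih =>
      intro h
      rcases Nat.lt_or_ge a (E + 1) with h' | h'
      · have ha : a ≤ E := by omega
        rw [Finset.sum_Ioc_succ_top ha, ih ha]
        have h2 : (2 : ℝ) ^ (-(E : ℤ)) = 2 * (2 : ℝ) ^ (-((E : ℤ) + 1)) := by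
          rw [show -(E : ℤ) = (-((E : ℤ) + 1)) + 1 by ring, zpow_add₀ (two_ne_zero), zpow_one]
          ring
        have h3 : (-(((E : ℕ) + 1 : ℕ) : ℤ)) = -((E : ℤ) + 1) := by push_cast; ring
        rw [h3, h2]; ring
      · have : a = E + 1 := by omega
        subst this; simp

lemma digit (ε : ℕ → ℕ) (hε : ∀ i, ε i ≤ 1) (L e : ℕ) (he : e < L) :
    (∑ i ∈ Finset.range L, ε i * 2 ^ i) / 2 ^ e % 2 = ε e := by
  have hsplit : ∑ i ∈ Finset.range L, ε i * 2 ^ i =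
      (∑ i ∈ Finset.range e, ε i * 2 ^ i) +
        (ε e + 2 * (∑ i ∈ Finset.Ico (e + 1) L, ε i * 2 ^ (i - (e + 1)))) * 2 ^ e := by
    rw [← Finset.sum_range_add_sum_Ico _ (show e + 1 ≤ L by omega), Finset.sum_range_succ]
    have : ∑ i ∈ Finset.Ico (e + 1) L, ε i * 2 ^ i =
        (∑ i ∈ Finset.Ico (e + 1) L, ε i * 2 ^ (i - (e + 1))) * 2 ^ (e + 1) := by
      rw [Finset.sum_mul]
      refine Finset.sum_congr rfl fun i hi => ?_
      have := (Finset.mem_Ico.mp hi).1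
      rw [mul_assoc, ← pow_add, show i - (e + 1) + (e + 1) = i by omega]
    rw [this, pow_succ]; ring
  have hlo : (∑ i ∈ Finset.range e, ε i * 2 ^ i) < 2 ^ e := by
    calc (∑ i ∈ Finset.range e, ε i * 2 ^ i) ≤ ∑ i ∈ Finset.range e, 2 ^ i := by
          refine Finset.sum_le_sum fun i _ => ?_
          have := hε i
          calc ε i * 2 ^ i ≤ 1 * 2 ^ i := Nat.mul_le_mul_right _ this
            _ = 2 ^ i := by ring
      _ = 2 ^ e - 1 := sum_range_two_pow e
      _ < 2 ^ e := by have := Nat.one_le_two_pow (n := e); omega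
  rw [hsplit, Nat.add_mul_div_right _ _ (Nat.pow_pos (by norm_num)),
    Nat.div_eq_of_lt hlo, zero_add, Nat.add_mul_mod_self_left,
    Nat.mod_eq_of_lt (by have := hε e; omega)]

lemma tele0 (f : ℕ → ℝ) (hf0 : f 0 = 0) : ∀ v, ∑ t ∈ Finset.Ioc 0 v, (f t - f (t - 1)) = f v := by
  intro v
  induction v with
  | zero => simp [hf0]
  | succ v ih => rw [Finset.sum_Ioc_succ_top (Nat.zero_le _), ih]; simp

lemma tele (f : ℕ → ℝ) (hf0 : f 0 = 0) (T v : ℕ) (hv : v ≤ T) :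
    ∑ t ∈ Finset.Ioc 0 T, (f t - f (t - 1)) * (if t ≤ v then (1 : ℝ) else 0) = f v := by
  have h1 : ∀ t ∈ Finset.Ioc 0 T, (f t - f (t - 1)) * (if t ≤ v then (1 : ℝ) else 0)
      = if t ≤ v then f t - f (t - 1) else 0 := fun t _ => by split_ifs <;> ring
  rw [Finset.sum_congr rfl h1, ← Finset.sum_filter]
  have h2 : Finset.filter (fun t => t ≤ v) (Finset.Ioc 0 T) = Finset.Ioc 0 v := by
    ext t; simp only [Finset.mem_filter, Finset.mem_Ioc]; omega
  rw [h2, tele0 f hf0]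

lemma win_eq_iff {D : ℕ} (hD : 1 ≤ D) {i : ℕ} (hi : 1 ≤ i) (j : ℕ) :
    win D i = j ↔ j * D < i ∧ i ≤ j * D + D := by
  unfold win
  have hdm := Nat.div_add_mod (i - 1) D
  have hm : (i - 1) % D < D := Nat.mod_lt _ (by omega)
  constructor
  · intro h; rw [h] at hdm; rw [mul_comm]; omega
  · rintro ⟨h1, h2⟩
    refine Nat.div_eq_of_lt_le (by omega) (by rw [add_one_mul]; omega)

lemma stepFun_of_nonneg {x : ℝ} (h : 0 ≤ x) : stepFun x = 1 := if_pos h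
lemma stepFun_of_neg {x : ℝ} (h : x < 0) : stepFun x = 0 := if_neg (not_le.mpr h)

/-- evaluation of the gate neuron -/
lemma gate_eval (Bn wn : ℕ) (x : ℝ) (hx0 : 0 ≤ x) (hxB : x < Bn) (j : ℕ)
    (hj1 : (j : ℝ) ≤ x) (hj2 : x < j + 1) (bb : ℕ) (hbb : bb ≤ 1) :
    stepFun ((x - wn) + (Bn : ℝ) * ((bb : ℝ) - stepFun (x - ((wn : ℕ) + 1 : ℕ)) - 1)) =
      (if bb = 1 ∧ wn = j then (1 : ℝ) else 0) := by
  have hB0 : (0 : ℝ) ≤ Bn := le_trans hx0 hxB.le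
  interval_cases bb
  · rw [if_neg (by simp)]
    refine stepFun_of_neg ?_
    rcases le_or_gt 0 (x - ((wn : ℕ) + 1 : ℕ)) with h | h
    · rw [stepFun_of_nonneg h]; push_cast; nlinarith
    · rw [stepFun_of_neg h]; push_cast; nlinarith
  · rcases le_or_gt 0 (x - ((wn : ℕ) + 1 : ℕ)) with h | h
    · -- x ≥ wn + 1, so wn < j, gate closed
      rw [stepFun_of_nonneg h]
      have hwj : wn ≠ j := by
        push_cast at h
        intro he; subst he; nlinarith
      rw [if_neg (by tauto)]
      refine stepFun_of_neg ?_
      push_cast; nlinarith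
    · rw [stepFun_of_neg h]
      push_cast at h
      rw [sub_lt_iff_lt_add, zero_add] at h
      rcases le_or_gt (wn : ℝ) x with h' | h'
      · -- wn ≤ x < wn + 1 : wn = j
        have : wn = j := by
          have b1 : (wn : ℝ) < j + 1 := lt_of_le_of_lt h' hj2
          have b2 : (j : ℝ) < wn + 1 := lt_of_le_of_lt hj1 h
          have c1 : wn < j + 1 := by exact_mod_cast b1
          have c2 : j < wn + 1 := by exact_mod_cast b2
          omega
        rw [if_pos ⟨rfl, this⟩]
        refine stepFun_of_nonneg ?_
        push_cast; nlinarith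
      · have hwj : wn ≠ j := by
          intro he; subst he; exact absurd hj1 (not_le.mpr h')
        rw [if_neg (by tauto)]
        refine stepFun_of_neg ?_
        push_cast; nlinarith

/-! ### Correctness -/

def ub (u : ℕ → ℝ) (i : ℕ) : ℕ := if u i = 1 then 1 else 0

def vnat (u : ℕ → ℝ) (R P : ℕ) : ℕ := ∑ s ∈ Finset.Ioc 0 R, ub u (P + s) * 2 ^ (R - s)

def gam (D j : ℕ) (i : ℕ) : ℝ :=
  if j * D < i ∧ i ≤ j * D + D then (2 : ℝ) ^ (j * D + D - i) else 0

def Zp (D j : ℕ) (u : ℕ → ℝ) (P : ℕ) : ℝ := ∑ i ∈ Finset.Ioc 0 P, u i * gam D j i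

def rp (u : ℕ → ℝ) (E P : ℕ) : ℝ := ∑ i ∈ Finset.Ioc P E, u i * (2 : ℝ) ^ (-(i : ℤ))

def Gval (D : ℕ) (u : ℕ → ℝ) (j P s : ℕ) : ℝ :=
  if ub u (P + s) = 1 ∧ win D (P + s) = j then 1 else 0

lemma zpm (a b : ℤ) : (2 : ℝ) ^ a * (2 : ℝ) ^ b = 2 ^ (a + b) := (zpow_add₀ two_ne_zero a b).symm

lemma eps_pos (D B R : ℕ) : 0 < eps D B R := by unfold eps; positivity

section vals

variable {D B R : ℕ} {u : ℕ → ℝ} {j : ℕ}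

lemma ub_le (u : ℕ → ℝ) (i : ℕ) : ub u i ≤ 1 := by unfold ub; split_ifs <;> omega

lemma u_eq_ub (hu : ∀ i, u i = 0 ∨ u i = 1) (i : ℕ) : u i = (ub u i : ℝ) := by
  unfold ub; rcases hu i with h | h <;> simp [h]

lemma u_nonneg (hu : ∀ i, u i = 0 ∨ u i = 1) (i : ℕ) : 0 ≤ u i := by
  rcases hu i with h | h <;> simp [h]

lemma u_le_one (hu : ∀ i, u i = 0 ∨ u i = 1) (i : ℕ) : u i ≤ 1 := by
  rcases hu i with h | h <;> simp [h]

lemma gam_nonneg (D j i : ℕ) : 0 ≤ gam D j i := by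
  unfold gam; split_ifs <;> positivity

lemma vnat_le (u : ℕ → ℝ) (R P : ℕ) : vnat u R P ≤ 2 ^ R - 1 := by
  calc vnat u R P ≤ ∑ s ∈ Finset.Ioc 0 R, 2 ^ (R - s) := by
        refine Finset.sum_le_sum fun s _ => ?_
        calc ub u (P + s) * 2 ^ (R - s) ≤ 1 * 2 ^ (R - s) :=
              Nat.mul_le_mul_right _ (ub_le u _)
          _ = 2 ^ (R - s) := one_mul _
    _ = 2 ^ R - 1 := geom_nat R

lemma Zp_nonneg (hu : ∀ i, u i = 0 ∨ u i = 1) (P : ℕ) : 0 ≤ Zp D j u P :=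
  Finset.sum_nonneg fun i _ => mul_nonneg (u_nonneg hu i) (gam_nonneg D j i)

lemma Zp_le (hu : ∀ i, u i = 0 ∨ u i = 1) (P : ℕ) : Zp D j u P ≤ 2 ^ D - 1 := by
  have h1 : Zp D j u P ≤ ∑ i ∈ Finset.Ioc 0 P, gam D j i := by
    refine Finset.sum_le_sum fun i _ => ?_
    calc u i * gam D j i ≤ 1 * gam D j i :=
          mul_le_mul_of_nonneg_right (u_le_one hu i) (gam_nonneg D j i)
      _ = gam D j i := one_mul _
  have h2 : ∑ i ∈ Finset.Ioc 0 P, gam D j i ≤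
      ∑ i ∈ Finset.Ioc (j * D) (j * D + D), (2 : ℝ) ^ (j * D + D - i) := by
    unfold gam
    rw [← Finset.sum_filter]
    refine Finset.sum_le_sum_of_subset_of_nonneg ?_ (fun i _ _ => by positivity)
    intro i hi
    simp only [Finset.mem_filter, Finset.mem_Ioc] at hi ⊢
    exact ⟨hi.2.1, hi.2.2⟩
  have h3 : ∑ i ∈ Finset.Ioc (j * D) (j * D + D), (2 : ℝ) ^ (j * D + D - i) =
      ∑ s ∈ Finset.Ioc 0 D, (2 : ℝ) ^ (D - s) := by
    have hmap : Finset.Ioc (j * D) (j * D + D) =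
        Finset.map (addLeftEmbedding (j * D)) (Finset.Ioc 0 D) := by
      rw [Finset.map_add_left_Ioc, add_zero]
    rw [hmap, Finset.sum_map]
    refine Finset.sum_congr rfl fun s hs => ?_
    have := (Finset.mem_Ioc.mp hs).2
    simp only [addLeftEmbedding_apply]
    congr 1
    omega
  have h4 : ∑ s ∈ Finset.Ioc 0 D, (2 : ℝ) ^ (D - s) = 2 ^ D - 1 := by
    have := geom_nat D
    have hcast : ((∑ s ∈ Finset.Ioc 0 D, 2 ^ (D - s) : ℕ) : ℝ) = ((2 ^ D - 1 : ℕ) : ℝ) := by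
      exact_mod_cast congrArg (Nat.cast (R := ℝ)) this
    push_cast [Nat.one_le_two_pow] at hcast
    exact hcast
  linarith

lemma rp_nonneg (hu : ∀ i, u i = 0 ∨ u i = 1) (E P : ℕ) : 0 ≤ rp u E P :=
  Finset.sum_nonneg fun i _ => mul_nonneg (u_nonneg hu i) (by positivity)

lemma rp_le (hu : ∀ i, u i = 0 ∨ u i = 1) {E P : ℕ} (h : P ≤ E) :
    rp u E P ≤ (2 : ℝ) ^ (-(P : ℤ)) - (2 : ℝ) ^ (-(E : ℤ)) := by
  calc rp u E P ≤ ∑ i ∈ Finset.Ioc P E, (2 : ℝ) ^ (-(i : ℤ)) := by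
        refine Finset.sum_le_sum fun i _ => ?_
        calc u i * (2:ℝ) ^ (-(i:ℤ)) ≤ 1 * (2:ℝ) ^ (-(i:ℤ)) :=
              mul_le_mul_of_nonneg_right (u_le_one hu i) (by positivity)
          _ = _ := one_mul _
    _ = _ := geom_zpow P E h

/-- the block of `R` bits following position `P`, as a real sum. -/
lemma block_sum (hu : ∀ i, u i = 0 ∨ u i = 1) (R P : ℕ) :
    ∑ i ∈ Finset.Ioc P (P + R), u i * (2 : ℝ) ^ (-(i : ℤ)) =
      (vnat u R P : ℝ) * (2 : ℝ) ^ (-(P + R : ℤ)) := by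
  have hmap : Finset.Ioc P (P + R) = Finset.map (addLeftEmbedding P) (Finset.Ioc 0 R) := by
    rw [Finset.map_add_left_Ioc, add_zero]
  rw [hmap, Finset.sum_map]
  unfold vnat
  push_cast
  rw [Finset.sum_mul]
  refine Finset.sum_congr rfl fun s hs => ?_
  obtain ⟨hs1, hs2⟩ := Finset.mem_Ioc.mp hs
  simp only [addLeftEmbedding_apply]
  rw [u_eq_ub hu (P + s)]
  have hexp : ((2:ℝ) ^ (R - s) : ℝ) * (2:ℝ) ^ (-((P:ℤ) + R)) = (2:ℝ) ^ (-((P + s : ℕ) : ℤ)) := by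
    rw [show ((2:ℝ) ^ (R - s) : ℝ) = (2:ℝ) ^ ((R - s : ℕ) : ℤ) from (zpow_natCast 2 (R-s)).symm, zpm]
    congr 1
    push_cast
    omega
  rw [← hexp]
  ring

end vals

lemma vnat_reindex (u : ℕ → ℝ) (R P : ℕ) :
    vnat u R P = ∑ e ∈ Finset.range R, ub u (P + (R - e)) * 2 ^ e := by
  unfold vnat
  refine Finset.sum_nbij' (fun s => R - s) (fun e => R - e) ?_ ?_ ?_ ?_ ?_ <;>
    intro a ha <;> simp only [Finset.mem_Ioc, Finset.mem_range] at *
  · omega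
  · omega
  · omega
  · omega
  · have h1 : R - (R - a) = a := by omega
    rw [h1]

lemma bitc_vnat (u : ℕ → ℝ) {R : ℕ} (P : ℕ) {s : ℕ} (hs1 : 1 ≤ s) (hs2 : s ≤ R) :
    bitc R s (vnat u R P) = ub u (P + s) := by
  rw [vnat_reindex]
  unfold bitc
  rw [digit (fun e => ub u (P + (R - e))) (fun e => ub_le u _) R (R - s) (by omega)]
  congr 1
  omega

lemma floor_bounds {D B R : ℕ} {u : ℕ → ℝ} {j : ℕ} (hu : ∀ i, u i = 0 ∨ u i = 1)
    {E P : ℕ} (hPR : P + R ≤ E) (hE2 : E < B * D + R) :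
    (vnat u R P : ℝ) ≤ (2:ℝ)^(P+R) * (eps D B R * Zp D j u P + rp u E P) ∧
    (2:ℝ)^(P+R) * (eps D B R * Zp D j u P + rp u E P) < vnat u R P + 1 := by
  have hcv : (2:ℝ)^(P+R) = (2:ℝ)^((P:ℤ)+(R:ℤ)) := by
    rw [← zpow_natCast 2 (P+R)]; norm_cast
  have hsplit : rp u E P = (∑ i ∈ Finset.Ioc P (P+R), u i * (2:ℝ)^(-(i:ℤ))) + rp u E (P+R) := by
    unfold rp
    rw [Finset.sum_Ioc_consecutive _ (Nat.le_add_right P R) hPR]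
  rw [hcv, hsplit, block_sum hu]
  set y : ℝ := (2:ℝ)^((P:ℤ)+(R:ℤ)) with hy
  have hy0 : 0 < y := by rw [hy]; positivity
  have hyv : y * ((vnat u R P : ℝ) * (2:ℝ)^(-((P:ℤ)+(R:ℤ)))) = (vnat u R P : ℝ) := by
    rw [hy, mul_comm ((vnat u R P : ℝ)) _, ← mul_assoc, zpm,
      show (P:ℤ)+(R:ℤ)+ -((P:ℤ)+(R:ℤ)) = 0 by ring, zpow_zero, one_mul]
  have hA0 : 0 ≤ y * (eps D B R * Zp D j u P) :=
    mul_nonneg hy0.le (mul_nonneg (eps_pos D B R).le (Zp_nonneg hu P))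
  have hC0 : 0 ≤ y * rp u E (P+R) := mul_nonneg hy0.le (rp_nonneg hu E (P+R))
  have hA1 : y * (eps D B R * Zp D j u P) < (2:ℝ)^((P:ℤ)+(R:ℤ)-(E:ℤ)-1) := by
    have h2 : y * eps D B R = (2:ℝ)^((P:ℤ)-(B*D:ℕ)-(D:ℕ)) := by
      rw [hy]; unfold eps; rw [zpm]; congr 1; push_cast; ring
    have h3 : y * (eps D B R * Zp D j u P) ≤ (2:ℝ)^((P:ℤ)-(B*D:ℕ)-(D:ℕ)) * (2^D - 1) := by
      rw [← mul_assoc, h2]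
      exact mul_le_mul_of_nonneg_left (Zp_le hu P) (by positivity)
    have h4 : (2:ℝ)^((P:ℤ)-(B*D:ℕ)-(D:ℕ)) * (2^D - 1) < (2:ℝ)^((P:ℤ)-(B*D:ℕ)) := by
      have h5 : (2:ℝ)^((P:ℤ)-(B*D:ℕ)-(D:ℕ)) * (2:ℝ)^(D:ℕ) = (2:ℝ)^((P:ℤ)-(B*D:ℕ)) := by
        rw [← zpow_natCast 2 D, zpm]; congr 1; ring
      calc (2:ℝ)^((P:ℤ)-(B*D:ℕ)-(D:ℕ)) * (2^D - 1)
          < (2:ℝ)^((P:ℤ)-(B*D:ℕ)-(D:ℕ)) * (2:ℝ)^(D:ℕ) := by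
            apply mul_lt_mul_of_pos_left _ (by positivity)
            linarith [pow_pos (show (0:ℝ) < 2 by norm_num) D]
        _ = _ := h5
    have h6 : (2:ℝ)^((P:ℤ)-(B*D:ℕ)) ≤ (2:ℝ)^((P:ℤ)+(R:ℤ)-(E:ℤ)-1) := by
      apply zpow_le_zpow_right₀ one_le_two
      push_cast
      omega
    linarith
  have hC1 : y * rp u E (P+R) ≤ 1 - (2:ℝ)^((P:ℤ)+(R:ℤ)-(E:ℤ)) := by
    have h7 := rp_le hu (show P + R ≤ E from hPR)
    have h8 : y * rp u E (P+R) ≤ y * ((2:ℝ)^(-((P+R:ℕ):ℤ)) - (2:ℝ)^(-(E:ℤ))) :=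
      mul_le_mul_of_nonneg_left h7 hy0.le
    have h9 : y * ((2:ℝ)^(-((P+R:ℕ):ℤ)) - (2:ℝ)^(-(E:ℤ))) = 1 - (2:ℝ)^((P:ℤ)+(R:ℤ)-(E:ℤ)) := by
      rw [hy, mul_sub, zpm, zpm]
      have e1 : (P:ℤ)+(R:ℤ) + -((P+R:ℕ):ℤ) = 0 := by push_cast; ring
      have e2 : (P:ℤ)+(R:ℤ) + -(E:ℤ) = (P:ℤ)+(R:ℤ)-(E:ℤ) := by ring
      rw [e1, e2, zpow_zero]
    linarith
  have hdbl : (2:ℝ)^((P:ℤ)+(R:ℤ)-(E:ℤ)) = 2 * (2:ℝ)^((P:ℤ)+(R:ℤ)-(E:ℤ)-1) := by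
    rw [show (P:ℤ)+(R:ℤ)-(E:ℤ) = ((P:ℤ)+(R:ℤ)-(E:ℤ)-1)+1 by ring, zpow_add₀ two_ne_zero, zpow_one]
    ring
  constructor
  · nlinarith [hyv]
  · nlinarith [hyv, zpow_pos (show (0:ℝ) < 2 by norm_num) ((P:ℤ)+(R:ℤ)-(E:ℤ)-1)]

/-! ### Layer evaluation -/

section evalsec

variable {D B R P : ℕ} {v : Fin 2 → ℝ}

lemma actA_at0 (h0 : 0 < Wd R) : actA D R P v ⟨0, h0⟩ = v 0 := by
  unfold actA tA; norm_num

lemma actA_at1 (h1 : 1 < Wd R) : actA D R P v ⟨1, h1⟩ = v 1 := by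
  unfold actA tA; norm_num

lemma actA_sig (s : ℕ) (hs1 : 1 ≤ s) (hs2 : s ≤ R) :
    sig R (actA D R P v) s = stepFun (v 0 - ((win D (P + s) + 1 : ℕ) : ℝ)) := by
  have hlt : 1 + s < Wd R := by
    have := Nat.one_le_two_pow (n := R); unfold Wd; omega
  unfold sig
  rw [dif_pos hlt]
  unfold actA tA
  have hv : (⟨1 + s, hlt⟩ : Fin (Wd R)).val = 1 + s := rfl
  rw [if_pos (by omega : 2 ≤ (⟨1 + s, hlt⟩ : Fin (Wd R)).val)]
  rw [if_neg (by omega : ¬ (⟨1 + s, hlt⟩ : Fin (Wd R)).val = 0)]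
  rw [if_neg (by omega : ¬ (⟨1 + s, hlt⟩ : Fin (Wd R)).val = 1)]
  rw [if_pos (by omega : (⟨1 + s, hlt⟩ : Fin (Wd R)).val ≤ R + 1)]
  rw [hv, show 1 + s - 1 = s by omega]

lemma actA_hco (t : ℕ) (ht1 : 1 ≤ t) (ht2 : t ≤ 2 ^ R - 1) :
    hco R (actA D R P v) t = stepFun ((2:ℝ) ^ (P + R) * v 1 - (t : ℝ)) := by
  have hlt : R + 1 + t < Wd R := by
    have := Nat.one_le_two_pow (n := R); unfold Wd; omega
  unfold hco
  rw [dif_pos hlt]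
  unfold actA tA
  have hv : (⟨R + 1 + t, hlt⟩ : Fin (Wd R)).val = R + 1 + t := rfl
  rw [if_pos (by omega : 2 ≤ (⟨R + 1 + t, hlt⟩ : Fin (Wd R)).val)]
  rw [if_neg (by omega : ¬ (⟨R + 1 + t, hlt⟩ : Fin (Wd R)).val = 0)]
  rw [if_neg (by omega : ¬ (⟨R + 1 + t, hlt⟩ : Fin (Wd R)).val = 1)]
  rw [if_neg (by omega : ¬ (⟨R + 1 + t, hlt⟩ : Fin (Wd R)).val ≤ R + 1)]
  rw [hv, show R + 1 + t - (R + 1) = t by omega]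

lemma actN_at0 {a : Fin (Wd R) → ℝ} (h0 : 0 < Nd R) :
    actN D B R P a ⟨0, h0⟩ = a ⟨0, by have := two_le_Wd R; omega⟩ := by
  unfold actN tN; norm_num

lemma actN_at1 {a : Fin (Wd R) → ℝ} (h1 : 1 < Nd R) :
    actN D B R P a ⟨1, h1⟩ =
      a ⟨1, by have := two_le_Wd R; omega⟩ - (2 : ℝ) ^ (-(P + R : ℤ)) * vsum R a := by
  unfold actN tN; norm_num

lemma actN_gco {a : Fin (Wd R) → ℝ} (s : ℕ) (hs1 : 1 ≤ s) (hs2 : s ≤ R) :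
    gco R (actN D B R P a) s =
      stepFun ((a ⟨0, by have := two_le_Wd R; omega⟩ - (win D (P + s) : ℝ)) +
        (B : ℝ) * (bsum R a s - sig R a s - 1)) := by
  have hlt : 1 + s < Nd R := by unfold Nd; omega
  unfold gco
  rw [dif_pos hlt]
  unfold actN tN
  have hv : (⟨1 + s, hlt⟩ : Fin (Nd R)).val = 1 + s := rfl
  rw [if_pos (by omega : 2 ≤ (⟨1 + s, hlt⟩ : Fin (Nd R)).val)]
  rw [if_neg (by omega : ¬ (⟨1 + s, hlt⟩ : Fin (Nd R)).val = 0)]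
  rw [if_neg (by omega : ¬ (⟨1 + s, hlt⟩ : Fin (Nd R)).val = 1)]
  rw [hv, show 1 + s - 1 = s by omega]

end evalsec

/-- per-position accounting identity -/
lemma term_eq {D : ℕ} (hD : 1 ≤ D) {u : ℕ → ℝ} (hu : ∀ i, u i = 0 ∨ u i = 1)
    (j : ℕ) {i : ℕ} (hi : 1 ≤ i) :
    u i * gam D j i =
      (2:ℝ) ^ ((win D i + 1) * D - i) * (if ub u i = 1 ∧ win D i = j then (1:ℝ) else 0) := by
  rcases hu i with h0 | h1
  · have : ub u i = 0 := by unfold ub; rw [h0]; norm_num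
    rw [h0, this]
    norm_num
  · have hub : ub u i = 1 := by unfold ub; rw [if_pos h1]
    rw [h1, hub]
    by_cases hw : win D i = j
    · rw [if_pos ⟨rfl, hw⟩]
      have hcond := (win_eq_iff hD hi j).mp hw
      unfold gam
      rw [if_pos hcond, hw, one_mul, mul_one]
      congr 1
      rw [add_one_mul]
    · rw [if_neg (by tauto)]
      unfold gam
      rw [if_neg (fun hc => hw ((win_eq_iff hD hi j).mpr hc))]
      norm_num

/-- main induction: one block of two layers peels `R` bits and accumulates gated output. -/
lemma correct (D B R : ℕ) (hD : 1 ≤ D) (hR : 1 ≤ R) (u : ℕ → ℝ)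
    (hu : ∀ i, u i = 0 ∨ u i = 1) (E : ℕ) (hE2 : E < B * D + R)
    (x : ℝ) (j : ℕ) (hx0 : 0 ≤ x) (hxB : x < B) (hj1 : (j:ℝ) ≤ x) (hj2 : x < j + 1) :
    ∀ m P, P + m * R = E →
      blockNet D B R m P ![x, eps D B R * Zp D j u P + rp u E P] 0 = Zp D j u E := by
  intro m
  induction m with
  | zero =>
      intro P hP
      have hPE : P = E := by omega
      show (eps D B R)⁻¹ * (![x, eps D B R * Zp D j u P + rp u E P] 1) = Zp D j u E
      have h1 : rp u E P = 0 := by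
        unfold rp
        rw [hPE, Finset.Ioc_self, Finset.sum_empty]
      rw [Matrix.cons_val_one, Matrix.cons_val_zero, h1, add_zero, ← mul_assoc,
        inv_mul_cancel₀ (ne_of_gt (eps_pos D B R)), one_mul, hPE]
  | succ m ih =>
      intro P hP
      have hP' : (P + R) + m * R = E := by rw [Nat.succ_mul] at hP; omega
      have hPR : P + R ≤ E := by omega
      set q : ℝ := eps D B R * Zp D j u P + rp u E P with hq
      set a : Fin (Wd R) → ℝ := actA D R P ![x, q] with haa
      have hv0 : (![x, q] : Fin 2 → ℝ) 0 = x := rfl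
      have hv1 : (![x, q] : Fin 2 → ℝ) 1 = q := rfl
      have hfb := floor_bounds (j := j) hu hPR hE2
      rw [← hq] at hfb
      -- h-step evaluation
      have hhco : ∀ t, 1 ≤ t → t ≤ 2 ^ R - 1 →
          hco R a t = (if t ≤ vnat u R P then (1:ℝ) else 0) := by
        intro t ht1 ht2
        rw [haa, actA_hco t ht1 ht2, hv1]
        split_ifs with h
        · refine stepFun_of_nonneg ?_
          have : (t : ℝ) ≤ (vnat u R P : ℝ) := by exact_mod_cast h
          linarith [hfb.1]
        · refine stepFun_of_neg ?_
          have : (vnat u R P : ℝ) + 1 ≤ (t : ℝ) := by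
            have : vnat u R P + 1 ≤ t := by omega
            exact_mod_cast this
          linarith [hfb.2]
      have hvsum : vsum R a = (vnat u R P : ℝ) := by
        unfold vsum
        rw [Finset.sum_congr rfl fun t ht => hhco t (Finset.mem_Ioc.mp ht).1 (Finset.mem_Ioc.mp ht).2]
        rw [Finset.sum_boole]
        have hfe : Finset.filter (fun t => t ≤ vnat u R P) (Finset.Ioc 0 (2 ^ R - 1)) =
            Finset.Ioc 0 (vnat u R P) := by
          ext t
          have := vnat_le u R P
          simp only [Finset.mem_filter, Finset.mem_Ioc]
          omega
        rw [hfe, Nat.card_Ioc]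
        norm_num
      have hbsum : ∀ s, 1 ≤ s → s ≤ R → bsum R a s = (ub u (P + s) : ℝ) := by
        intro s hs1 hs2
        unfold bsum
        rw [Finset.sum_congr rfl fun t ht => by
          rw [hhco t (Finset.mem_Ioc.mp ht).1 (Finset.mem_Ioc.mp ht).2]]
        rw [tele (fun t => (bitc R s t : ℝ)) (by simp [bitc]) (2 ^ R - 1) (vnat u R P) (vnat_le u R P)]
        rw [bitc_vnat u P hs1 hs2]
      -- narrow layer values
      set n : Fin (Nd R) → ℝ := actN D B R P a with hnn
      have hn0 : ∀ h0 : 0 < Nd R, n ⟨0, h0⟩ = x := by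
        intro h0
        rw [hnn, actN_at0 h0, haa, actA_at0, hv0]
      have hn1 : ∀ h1 : 1 < Nd R, n ⟨1, h1⟩ = q - (2 : ℝ) ^ (-(P + R : ℤ)) * (vnat u R P : ℝ) := by
        intro h1
        rw [hnn, actN_at1 h1, haa, actA_at1, hv1, ← haa, hvsum]
      have hgco : ∀ s, 1 ≤ s → s ≤ R → gco R n s = Gval D u j P s := by
        intro s hs1 hs2
        rw [hnn, actN_gco s hs1 hs2]
        rw [show (a ⟨0, by have := two_le_Wd R; omega⟩) = x from by rw [haa, actA_at0, hv0]]
        rw [hbsum s hs1 hs2, haa, actA_sig s hs1 hs2, hv0]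
        have := gate_eval B (win D (P + s)) x hx0 hxB j hj1 hj2 (ub u (P + s)) (ub_le u _)
        rw [this]
        rfl
      -- the two accounting identities
      have hrstep : rp u E P - (2:ℝ) ^ (-(P + R : ℤ)) * (vnat u R P : ℝ) = rp u E (P + R) := by
        have hsplit : rp u E P =
            (∑ i ∈ Finset.Ioc P (P + R), u i * (2:ℝ) ^ (-(i:ℤ))) + rp u E (P + R) := by
          unfold rp
          rw [Finset.sum_Ioc_consecutive _ (Nat.le_add_right P R) hPR]
        rw [hsplit, block_sum hu]
        ring
      have hZstep : Zp D j u (P + R) = Zp D j u P +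
          ∑ s ∈ Finset.Ioc 0 R, (2:ℝ) ^ ((win D (P + s) + 1) * D - (P + s)) * Gval D u j P s := by
        unfold Zp
        rw [← Finset.sum_Ioc_consecutive _ (Nat.zero_le P) (Nat.le_add_right P R)]
        congr 1
        have hmap : Finset.Ioc P (P + R) = Finset.map (addLeftEmbedding P) (Finset.Ioc 0 R) := by
          rw [Finset.map_add_left_Ioc, add_zero]
        rw [hmap, Finset.sum_map]
        refine Finset.sum_congr rfl fun s hs => ?_
        obtain ⟨hs1, hs2⟩ := Finset.mem_Ioc.mp hs
        simp only [addLeftEmbedding_apply]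
        exact term_eq hD hu j (by omega)
      -- output of the inter-block affine map
      have htb : tB D B R P n = ![x, eps D B R * Zp D j u (P + R) + rp u E (P + R)] := by
        funext i
        fin_cases i
        · show tB D B R P n ⟨0, by omega⟩ = x
          unfold tB
          rw [if_pos rfl]
          exact hn0 _
        · show tB D B R P n ⟨1, by omega⟩ = eps D B R * Zp D j u (P + R) + rp u E (P + R)
          unfold tB
          rw [if_neg (by norm_num)]
          rw [hn1 (by unfold Nd; omega)]
          rw [Finset.sum_congr rfl fun s hs =>
            by rw [hgco s (Finset.mem_Ioc.mp hs).1 (Finset.mem_Ioc.mp hs).2]]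
          rw [hZstep]
          rw [← hrstep]
          ring
      show blockNet D B R m (P + R) (tB D B R P (actN D B R P (actA D R P ![x, q]))) 0 = Zp D j u E
      rw [← haa, ← hnn, htb]
      exact ih (P + R) hP'

end St17

/-- Lemma 12: a Step+Id network extracting `D` consecutive
bits (as an integer in `[0, 2^D)`) from a binary-encoded parameter `w`. -/
theorem statement_17 (D B R : ℕ) (hD : 1 ≤ D) (hB : 1 ≤ B) (hR : 1 ≤ R)
    (X : Finset ℝ) (hX : ∀ x ∈ X, 0 ≤ x ∧ x < (B : ℝ)) :
    ∃ ws : List ℕ, ws.length = 2 * ((B * D) ⌈/⌉ R) ∧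
      paramCount 2 ws 1 ≤
        ((2 * R + 5) * 2 ^ R + 2 * R ^ 2 + 8 * R + 7) * ((B * D) ⌈/⌉ R)
          - R * 2 ^ R - R ^ 2 + 3 ∧
      ∃ f : (Fin 2 → ℝ) → (Fin 1 → ℝ), IsStepIdNet 2 ws 1 f ∧
        ∀ u : ℕ → ℝ, (∀ i, u i = 0 ∨ u i = 1) →
        ∀ x ∈ X,
          f ![x, ∑ i ∈ Finset.Icc 1 (B * D), u i * (2 : ℝ) ^ (-(i : ℤ))] 0 =
            ∑ i ∈ Finset.Icc 1 D, u (⌊x⌋.toNat * D + i) * (2 : ℝ) ^ (D - i) := by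
  classical
  set K : ℕ := (B * D) ⌈/⌉ R with hK
  -- basic facts about K
  have hKfacts : B * D ≤ K * R ∧ K * R < B * D + R := by
    have hform : K = (B * D + R - 1) / R := Nat.ceilDiv_eq_add_pred_div (B * D) R
    have hdm := Nat.div_add_mod (B * D + R - 1) R
    have hmod : (B * D + R - 1) % R < R := Nat.mod_lt _ (by omega)
    rw [← hform] at hdm
    rw [mul_comm K R]
    omega
  have hK1 : 1 ≤ K := by
    rcases hKfacts with ⟨h1, _⟩
    rcases Nat.eq_zero_or_pos K with h | h
    · rw [h] at h1; simp at h1; rcases h1 with h1 | h1 <;> omega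
    · exact h
  refine ⟨St17.wsL R K, by rw [St17.wsL_length], ?_, St17.blockNet D B R K 0,
    St17.blockNet_isNet D B R K 0, ?_⟩
  · -- parameter count
    obtain ⟨m, hm⟩ : ∃ m, K = m + 1 := ⟨K - 1, by omega⟩
    have hpc := St17.paramCount_wsL R m
    rw [← hm] at hpc
    set pc := paramCount 2 (St17.wsL R K) 1
    set S := ((2 * R + 5) * 2 ^ R + 2 * R ^ 2 + 8 * R + 7) * K with hS
    set A1 := R * 2 ^ R
    set A2 := R ^ 2
    omega
  · -- correctness
    intro u hu x hx
    obtain ⟨hx0, hxB⟩ := hX x hx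
    set j : ℕ := ⌊x⌋.toNat with hj
    have hfl0 : (0 : ℤ) ≤ ⌊x⌋ := Int.floor_nonneg.mpr hx0
    have hjcast : ((j : ℕ) : ℝ) = ((⌊x⌋ : ℤ) : ℝ) := by
      exact_mod_cast congrArg (fun z : ℤ => (z : ℝ)) (Int.toNat_of_nonneg hfl0)
    have hj1 : (j : ℝ) ≤ x := by rw [hjcast]; exact Int.floor_le x
    have hj2 : x < (j : ℝ) + 1 := by rw [hjcast]; exact Int.lt_floor_add_one x
    have hjB : j < B := by
      have : (j : ℝ) < (B : ℝ) := lt_of_le_of_lt hj1 hxB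
      exact_mod_cast this
    -- padded bit sequence
    set u' : ℕ → ℝ := fun i => if i ≤ B * D then u i else 0 with hu'
    have hu'01 : ∀ i, u' i = 0 ∨ u' i = 1 := by
      intro i; rw [hu']; dsimp only; split_ifs
      · exact hu i
      · exact Or.inl rfl
    set E : ℕ := K * R with hE
    have hE1 : B * D ≤ E := hKfacts.1
    have hE2 : E < B * D + R := hKfacts.2
    -- the input value
    have hw : St17.eps D B R * St17.Zp D j u' 0 + St17.rp u' E 0 =
        ∑ i ∈ Finset.Icc 1 (B * D), u i * (2 : ℝ) ^ (-(i : ℤ)) := by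
      have hZ0 : St17.Zp D j u' 0 = 0 := by
        unfold St17.Zp; rw [Finset.Ioc_self, Finset.sum_empty]
      have hr0 : St17.rp u' E 0 = ∑ i ∈ Finset.Icc 1 (B * D), u i * (2 : ℝ) ^ (-(i : ℤ)) := by
        unfold St17.rp
        rw [← Finset.sum_Ioc_consecutive _ (Nat.zero_le (B * D)) hE1]
        have hz : ∑ i ∈ Finset.Ioc (B * D) E, u' i * (2 : ℝ) ^ (-(i : ℤ)) = 0 := by
          refine Finset.sum_eq_zero fun i hi => ?_
          have := (Finset.mem_Ioc.mp hi).1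
          rw [hu']; dsimp only; rw [if_neg (by omega)]; ring
        rw [hz, add_zero, (show Finset.Icc 1 (B * D) = Finset.Ioc 0 (B * D) from Finset.Icc_succ_left_eq_Ioc _ _)]
        refine Finset.sum_congr rfl fun i hi => ?_
        have := (Finset.mem_Ioc.mp hi).2
        rw [hu']; dsimp only; rw [if_pos (by omega)]
      rw [hZ0, hr0, mul_zero, zero_add]
    rw [← hw]
    have hcor := St17.correct D B R hD hR u' hu'01 E hE2 x j hx0 hxB hj1 hj2 K 0
      (by rw [hE]; ring)
    rw [hcor]
    -- convert `Zp` at `E` to the required sum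
    have hwin : j * D + D ≤ B * D := by
      have : (j + 1) * D ≤ B * D := Nat.mul_le_mul_right D (by omega)
      rw [add_one_mul] at this
      omega
    unfold St17.Zp
    have hterm : ∀ i ∈ Finset.Ioc 0 E, u' i * St17.gam D j i =
        if i ∈ Finset.Ioc (j * D) (j * D + D) then u' i * (2 : ℝ) ^ (j * D + D - i) else 0 := by
      intro i _
      unfold St17.gam
      by_cases h : j * D < i ∧ i ≤ j * D + D
      · rw [if_pos h, if_pos (Finset.mem_Ioc.mpr h)]
      · rw [if_neg h, if_neg (fun hm => h (Finset.mem_Ioc.mp hm))]; ring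
    rw [Finset.sum_congr rfl hterm, Finset.sum_ite_mem]
    have hinter : Finset.Ioc 0 E ∩ Finset.Ioc (j * D) (j * D + D) =
        Finset.Ioc (j * D) (j * D + D) := by
      refine Finset.inter_eq_right.mpr fun i hi => ?_
      rw [Finset.mem_Ioc] at hi ⊢
      omega
    rw [hinter]
    have hmap : Finset.Ioc (j * D) (j * D + D) =
        Finset.map (addLeftEmbedding (j * D)) (Finset.Ioc 0 D) := by
      rw [Finset.map_add_left_Ioc, add_zero]
    rw [hmap, Finset.sum_map, (show Finset.Icc 1 D = Finset.Ioc 0 D from Finset.Icc_succ_left_eq_Ioc _ _)]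
    refine Finset.sum_congr rfl fun s hs => ?_
    obtain ⟨hs1, hs2⟩ := Finset.mem_Ioc.mp hs
    simp only [addLeftEmbedding_apply]
    have hidx : j * D + s ≤ B * D := by omega
    rw [hu']; dsimp only; rw [if_pos hidx]
    rw [show j * D + D - (j * D + s) = D - s by omega]
end
end
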